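/- arXiv:2401.07165 — 6 statements merged into one kernel-verified Lean document; each statement's English description precedes it below -/
import Mathlib

section
/- Let G be a finite edge-weighted graph with all edge weights in [w_min, w_max] where 0 < w_min ≤ w_max, and with no isolated vertices. Let S ⊆ V(G) be an r-net of G (every vertex is within graph distance r of S), and let H = G − S be the graph obtained by deleting S and incident edges. Then λ₁(H)^{2r} ≤ λ₁(G)^{2r} − w_min^{2r}, where λ₁ denotes the largest eigenvalue of the weighted adjacency matrix. -/
open scoped Classical

/-- The largest element of the spectrum of a real matrix (for a Hermitian
matrix this is the largest eigenvalue). -/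
noncomputable def lam1 {V : Type*} [Fintype V] [DecidableEq V] (M : Matrix V V ℝ) : ℝ :=
  sSup (spectrum ℝ M)

set_option linter.unusedSectionVars false
open scoped InnerProductSpace
open Finset Matrix

section Helpers

variable {V : Type*} [Fintype V] [DecidableEq V]

lemma pow_mulVec_eigen {M : Matrix V V ℝ} (hM : M.IsHermitian) (k : ℕ) (j : V) :
    (M ^ k) *ᵥ ⇑(hM.eigenvectorBasis j) = (hM.eigenvalues j ^ k) • ⇑(hM.eigenvectorBasis j) := by
  induction k with
  | zero => simp
  | succ k ih =>
      rw [pow_succ', ← Matrix.mulVec_mulVec, ih, Matrix.mulVec_smul,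
        hM.mulVec_eigenvectorBasis, smul_smul, ← pow_succ]

lemma inner_eq_sum (x y : EuclideanSpace ℝ V) : ⟪x, y⟫_ℝ = ∑ u, x u * y u := by
  simp [PiLp.inner_apply, RCLike.inner_apply, conj_trivial]
  exact Finset.sum_congr rfl fun _ _ => mul_comm _ _

lemma quad_eq {M : Matrix V V ℝ} (hM : M.IsHermitian) (k : ℕ) (x : EuclideanSpace ℝ V) :
    ∑ u, ∑ v, x u * (M ^ k) u v * x v
      = ∑ i, hM.eigenvalues i ^ k * (⟪hM.eigenvectorBasis i, x⟫_ℝ) ^ 2 := by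
  have hsymm : ∀ u v : V, (M ^ k) u v = (M ^ k) v u := by
    intro u v
    have := (hM.pow k)
    calc (M ^ k) u v = ((M ^ k)ᴴ) u v := by rw [this]
    _ = (M ^ k) v u := by simp [Matrix.conjTranspose_apply]
  have key : ∀ i : V, ⟪hM.eigenvectorBasis i, (WithLp.toLp 2 ((M ^ k) *ᵥ x) : EuclideanSpace ℝ V)⟫_ℝ
      = hM.eigenvalues i ^ k * ⟪hM.eigenvectorBasis i, x⟫_ℝ := by
    intro i
    rw [inner_eq_sum, inner_eq_sum]
    calc ∑ u, (hM.eigenvectorBasis i) u * ((M ^ k) *ᵥ x) u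
        = ∑ u, ∑ v, (M ^ k) v u * (hM.eigenvectorBasis i) u * x v := by
          simp only [Matrix.mulVec, dotProduct, Finset.mul_sum]
          refine Finset.sum_congr rfl fun u _ => Finset.sum_congr rfl fun v _ => ?_
          rw [hsymm v u]; ring
      _ = ∑ v, ((M ^ k) *ᵥ ⇑(hM.eigenvectorBasis i)) v * x v := by
          rw [Finset.sum_comm]
          refine Finset.sum_congr rfl fun v _ => ?_
          simp only [Matrix.mulVec, dotProduct, Finset.sum_mul]
      _ = hM.eigenvalues i ^ k * ∑ v, (hM.eigenvectorBasis i) v * x v := by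
          rw [pow_mulVec_eigen hM k i]
          simp [Finset.mul_sum, mul_assoc]
  calc ∑ u, ∑ v, x u * (M ^ k) u v * x v
      = ⟪x, (WithLp.toLp 2 ((M ^ k) *ᵥ x) : EuclideanSpace ℝ V)⟫_ℝ := by
        rw [inner_eq_sum]
        refine Finset.sum_congr rfl fun u _ => ?_
        simp only [WithLp.ofLp_toLp, Matrix.mulVec, dotProduct, Finset.mul_sum]
        exact Finset.sum_congr rfl fun v _ => by ring
    _ = ∑ i, ⟪x, hM.eigenvectorBasis i⟫_ℝ * ⟪hM.eigenvectorBasis i, (WithLp.toLp 2 ((M ^ k) *ᵥ x) : EuclideanSpace ℝ V)⟫_ℝ := by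
        rw [OrthonormalBasis.sum_inner_mul_inner]
    _ = ∑ i, hM.eigenvalues i ^ k * (⟪hM.eigenvectorBasis i, x⟫_ℝ) ^ 2 := by
        refine Finset.sum_congr rfl fun i _ => ?_
        rw [key i, real_inner_comm x]; ring

lemma sum_sq_inner {M : Matrix V V ℝ} (hM : M.IsHermitian) (x : EuclideanSpace ℝ V) :
    ∑ i, (⟪hM.eigenvectorBasis i, x⟫_ℝ) ^ 2 = ∑ u, x u * x u := by
  have h := quad_eq hM 0 x
  simp only [pow_zero, one_mul, Matrix.one_apply, mul_ite, ite_mul, mul_one, mul_zero,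
    zero_mul, Finset.sum_ite_eq, Finset.mem_univ, if_true] at h
  exact h.symm

lemma quad_le_max {M : Matrix V V ℝ} (hM : M.IsHermitian) {i₀ : V}
    (hmax : ∀ i, hM.eigenvalues i ≤ hM.eigenvalues i₀) (x : EuclideanSpace ℝ V)
    (hx : ∑ u, x u * x u = 1) :
    ∑ u, ∑ v, x u * M u v * x v ≤ hM.eigenvalues i₀ := by
  have hq := quad_eq hM 1 x
  simp only [pow_one] at hq
  rw [hq]
  calc ∑ i, hM.eigenvalues i * (⟪hM.eigenvectorBasis i, x⟫_ℝ) ^ 2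
      ≤ ∑ i, hM.eigenvalues i₀ * (⟪hM.eigenvectorBasis i, x⟫_ℝ) ^ 2 :=
        Finset.sum_le_sum fun i _ => mul_le_mul_of_nonneg_right (hmax i) (sq_nonneg _)
    _ = hM.eigenvalues i₀ * ∑ i, (⟪hM.eigenvectorBasis i, x⟫_ℝ) ^ 2 := by
        rw [Finset.mul_sum]
    _ = hM.eigenvalues i₀ := by rw [sum_sq_inner hM x, hx, mul_one]

lemma quad_basis {M : Matrix V V ℝ} (hM : M.IsHermitian) (j : V) :
    ∑ u, ∑ v, (hM.eigenvectorBasis j) u * M u v * (hM.eigenvectorBasis j) v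
      = hM.eigenvalues j := by
  have hq := quad_eq hM 1 (hM.eigenvectorBasis j)
  simp only [pow_one] at hq
  rw [hq]
  have horth := hM.eigenvectorBasis.orthonormal
  rw [orthonormal_iff_ite] at horth
  simp [horth]

lemma lam1_eq_max {M : Matrix V V ℝ} [Nonempty V] (hM : M.IsHermitian) {i₀ : V}
    (hmax : ∀ i, hM.eigenvalues i ≤ hM.eigenvalues i₀) : lam1 M = hM.eigenvalues i₀ := by
  refine IsGreatest.csSup_eq ⟨hM.eigenvalues_mem_spectrum_real i₀, ?_⟩
  intro a ha
  rw [← Matrix.spectrum_toEuclideanLin] at ha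
  have hev : Module.End.HasEigenvalue (Matrix.toEuclideanLin M) a :=
    Module.End.hasEigenvalue_iff_mem_spectrum.2 ha
  obtain ⟨y, hy⟩ := hev.exists_hasEigenvector
  have happ : ∀ u : V, (M *ᵥ (y : V → ℝ)) u = a * y u := by
    intro u
    calc (M *ᵥ (y : V → ℝ)) u = (Matrix.toEuclideanLin M y) u := rfl
    _ = (a • y) u := by rw [hy.apply_eq_smul]
    _ = a * y u := rfl
  have hy0 : ∃ u, y u ≠ 0 := by
    by_contra hcon
    push_neg at hcon
    exact hy.2 (by ext u; exact hcon u)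
  obtain ⟨u₀, hu₀⟩ := hy0
  have hpos : 0 < ∑ u, y u * y u := by
    refine Finset.sum_pos' (fun u _ => mul_self_nonneg _) ⟨u₀, Finset.mem_univ _, ?_⟩
    exact mul_self_pos.mpr hu₀
  have hL : ∑ u, ∑ v, y u * M u v * y v = a * ∑ u, y u * y u := by
    calc ∑ u, ∑ v, y u * M u v * y v = ∑ u, y u * (M *ᵥ (y : V → ℝ)) u := by
          refine Finset.sum_congr rfl fun u _ => ?_
          simp only [Matrix.mulVec, dotProduct, Finset.mul_sum]
          exact Finset.sum_congr rfl fun v _ => by ring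
      _ = a * ∑ u, y u * y u := by
          rw [Finset.mul_sum]
          exact Finset.sum_congr rfl fun u _ => by rw [happ u]; ring
  have hU : ∑ u, ∑ v, y u * M u v * y v ≤ hM.eigenvalues i₀ * ∑ u, y u * y u := by
    have hq := quad_eq hM 1 y
    simp only [pow_one] at hq
    rw [hq, ← sum_sq_inner hM y, Finset.mul_sum]
    exact Finset.sum_le_sum fun i _ => mul_le_mul_of_nonneg_right (hmax i) (sq_nonneg _)
  rw [hL] at hU
  exact le_of_mul_le_mul_right hU hpos

lemma pow_entry_mono {N M : Matrix V V ℝ} (hN : ∀ u v, 0 ≤ N u v)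
    (hNM : ∀ u v, N u v ≤ M u v) (k : ℕ) :
    ∀ u v, 0 ≤ (N ^ k) u v ∧ (N ^ k) u v ≤ (M ^ k) u v := by
  induction k with
  | zero =>
      intro u v
      simp only [pow_zero]
      exact ⟨by rw [Matrix.one_apply]; positivity, le_rfl⟩
  | succ k ih =>
      intro u v
      rw [pow_succ, pow_succ, Matrix.mul_apply, Matrix.mul_apply]
      constructor
      · exact Finset.sum_nonneg fun j _ => mul_nonneg ((ih u j).1) (hN j v)
      · refine Finset.sum_le_sum fun j _ => mul_le_mul ((ih u j).2) (hNM j v) (hN j v) ?_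
        exact le_trans ((ih u j).1) ((ih u j).2)

lemma prod_le_pow_entry {N : Matrix V V ℝ} (hN : ∀ u v, 0 ≤ N u v) :
    ∀ (k : ℕ) (f : ℕ → V),
      ∏ i ∈ Finset.range k, N (f i) (f (i + 1)) ≤ (N ^ k) (f 0) (f k) := by
  intro k
  induction k with
  | zero => intro f; simp [Matrix.one_apply]
  | succ k ih =>
      intro f
      rw [Finset.prod_range_succ', pow_succ', Matrix.mul_apply]
      have h1 : ∏ i ∈ Finset.range k, N (f (i + 1)) (f (i + 1 + 1)) ≤ (N ^ k) (f 1) (f (k + 1)) :=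
        ih (fun i => f (i + 1))
      calc (∏ i ∈ Finset.range k, N (f (i + 1)) (f (i + 1 + 1))) * N (f 0) (f 1)
          ≤ (N ^ k) (f 1) (f (k + 1)) * N (f 0) (f 1) :=
            mul_le_mul_of_nonneg_right h1 (hN _ _)
        _ = N (f 0) (f 1) * (N ^ k) (f 1) (f (k + 1)) := mul_comm _ _
        _ ≤ ∑ j, N (f 0) j * (N ^ k) j (f (k + 1)) := by
            refine Finset.single_le_sum (f := fun j => N (f 0) j * (N ^ k) j (f (k + 1)))
              (fun j _ => ?_) (Finset.mem_univ (f 1))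
            exact mul_nonneg (hN _ _) ((pow_entry_mono hN (fun u v => le_rfl) k j (f (k+1))).1)

lemma gap_le {N M : Matrix V V ℝ} (hN : ∀ u v, 0 ≤ N u v) (hNM : ∀ u v, N u v ≤ M u v) :
    ∀ (k : ℕ) (f : ℕ → V),
      (N ^ k) (f 0) (f k) + ∏ i ∈ Finset.range k, M (f i) (f (i + 1))
        ≤ (M ^ k) (f 0) (f k) + ∏ i ∈ Finset.range k, N (f i) (f (i + 1)) := by
  intro k
  induction k with
  | zero => intro f; simp
  | succ k ih =>
      intro f
      have hM0 : ∀ u v, 0 ≤ M u v := fun u v => le_trans (hN u v) (hNM u v)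
      rw [Finset.prod_range_succ', Finset.prod_range_succ', pow_succ', pow_succ',
        Matrix.mul_apply, Matrix.mul_apply]
      rw [← Finset.sum_erase_add Finset.univ (fun j => N (f 0) j * (N ^ k) j (f (k + 1)))
          (Finset.mem_univ (f 1)),
        ← Finset.sum_erase_add Finset.univ (fun j => M (f 0) j * (M ^ k) j (f (k + 1)))
          (Finset.mem_univ (f 1))]
      have hrest : ∑ j ∈ Finset.univ.erase (f 1), N (f 0) j * (N ^ k) j (f (k + 1))
          ≤ ∑ j ∈ Finset.univ.erase (f 1), M (f 0) j * (M ^ k) j (f (k + 1)) := by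
        refine Finset.sum_le_sum fun j _ => ?_
        exact mul_le_mul (hNM _ _) ((pow_entry_mono hN hNM k j (f (k+1))).2)
          ((pow_entry_mono hN hNM k j (f (k+1))).1) (hM0 _ _)
      have hIH := ih (fun i => f (i + 1))
      have hprodN : ∏ i ∈ Finset.range k, N (f (i + 1)) (f (i + 1 + 1))
          ≤ (N ^ k) (f 1) (f (k + 1)) := prod_le_pow_entry hN k (fun i => f (i + 1))
      have hprodN0 : 0 ≤ ∏ i ∈ Finset.range k, N (f (i + 1)) (f (i + 1 + 1)) :=
        Finset.prod_nonneg fun i _ => hN _ _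
      nlinarith [mul_le_mul_of_nonneg_left hIH (hM0 (f 0) (f 1)),
        mul_le_mul_of_nonneg_right (hNM (f 0) (f 1)) hprodN0,
        mul_le_mul_of_nonneg_left hprodN (sub_nonneg.mpr (hNM (f 0) (f 1))),
        hrest]

end Helpers

set_option maxHeartbeats 2000000 in
/-- Net removal lowers the spectral radius: if `S` is an `r`-net of an
edge-weighted graph `G` (weights in `[wmin, wmax]`, no isolated vertices) and
`H = G - S`, then `λ₁(H)^{2r} ≤ λ₁(G)^{2r} - wmin^{2r}`. -/
theorem stmt0 {V : Type*} [Fintype V] [DecidableEq V] [Nonempty V]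
    (G : SimpleGraph V) (w : V → V → ℝ) (wmin wmax : ℝ)
    (hwmin : 0 < wmin) (hminmax : wmin ≤ wmax)
    (hsymm : ∀ u v, w u v = w v u)
    (hrange : ∀ u v, G.Adj u v → w u v ∈ Set.Icc wmin wmax)
    (hnoiso : ∀ v, ∃ u, G.Adj v u)
    (A : Matrix V V ℝ)
    (hA : A = fun u v => if G.Adj u v then w u v else 0)
    (S : Set V) (r : ℕ) (hr : 0 < r)
    (hnet : ∀ v, ∃ s ∈ S, G.Reachable v s ∧ G.dist v s ≤ r)
    (H : Matrix V V ℝ)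
    (hH : H = fun u v => if u ∈ S ∨ v ∈ S then 0 else A u v) :
    lam1 H ^ (2 * r) ≤ lam1 A ^ (2 * r) - wmin ^ (2 * r) := by
  classical
  have hAe : ∀ u v, A u v = if G.Adj u v then w u v else 0 := fun u v => by rw [hA]
  have hHe : ∀ u v, H u v = if u ∈ S ∨ v ∈ S then 0 else A u v := fun u v => by rw [hH]
  have hA0 : ∀ u v, 0 ≤ A u v := by
    intro a b; rw [hAe]; split
    · exact hwmin.le.trans (hrange _ _ (by assumption)).1
    · exact le_rfl
  have hH0 : ∀ u v, 0 ≤ H u v := by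
    intro a b; rw [hHe]; split
    · exact le_rfl
    · exact hA0 a b
  have hHA : ∀ u v, H u v ≤ A u v := by
    intro a b; rw [hHe]; split
    · exact hA0 a b
    · exact le_rfl
  have hAsymm : ∀ u v, A u v = A v u := by
    intro u v; rw [hAe, hAe]
    by_cases h : G.Adj u v
    · rw [if_pos h, if_pos h.symm, hsymm]
    · rw [if_neg h, if_neg fun h' => h h'.symm]
  have hHsymm : ∀ u v, H u v = H v u := by
    intro u v; rw [hHe, hHe]
    by_cases h : u ∈ S ∨ v ∈ S
    · rw [if_pos h, if_pos h.symm]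
    · rw [if_neg h, if_neg fun h' => h h'.symm, hAsymm]
  have hermA : A.IsHermitian := by
    refine Matrix.ext fun u v => ?_
    rw [Matrix.conjTranspose_apply, hAsymm v u]; exact star_trivial _
  have hermH : H.IsHermitian := by
    refine Matrix.ext fun u v => ?_
    rw [Matrix.conjTranspose_apply, hHsymm v u]; exact star_trivial _
  obtain ⟨i₀, hi₀⟩ := Finite.exists_max hermH.eigenvalues
  obtain ⟨j₀, hj₀⟩ := Finite.exists_max hermA.eigenvalues
  have hlamH : lam1 H = hermH.eigenvalues i₀ := lam1_eq_max hermH hi₀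
  have hlamA : lam1 A = hermA.eigenvalues j₀ := lam1_eq_max hermA hj₀
  -- nonnegativity of the top eigenvalue of H, via zero trace
  have hdiag0 : ∀ u : V, H u u = 0 := by
    intro u; rw [hHe]
    split
    · rfl
    · rw [hAe, if_neg (G.irrefl)]
  have hcomp : ∀ u v : V, ∑ i, hermH.eigenvectorBasis i u * hermH.eigenvectorBasis i v
      = if u = v then (1 : ℝ) else 0 := by
    intro u v
    have h := hermH.eigenvectorBasis.sum_inner_mul_inner
      (EuclideanSpace.single u (1 : ℝ)) (EuclideanSpace.single v (1 : ℝ))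
    simp only [inner_eq_sum, EuclideanSpace.single_apply] at h
    simp only [ite_mul, one_mul, zero_mul, mul_ite, mul_one, mul_zero,
      Finset.sum_ite_eq', Finset.mem_univ, if_true] at h
    rw [show ∑ i, hermH.eigenvectorBasis i u * hermH.eigenvectorBasis i v
      = ∑ x, hermH.eigenvectorBasis x u * hermH.eigenvectorBasis x v from rfl, h]
    simp [eq_comm]
  have hsum_eig : ∑ i, hermH.eigenvalues i = 0 := by
    calc ∑ i, hermH.eigenvalues i
        = ∑ i, ∑ u, ∑ v, hermH.eigenvectorBasis i u * H u v * hermH.eigenvectorBasis i v :=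
          Finset.sum_congr rfl fun i _ => (quad_basis hermH i).symm
      _ = ∑ u, ∑ v, (∑ i, hermH.eigenvectorBasis i u * hermH.eigenvectorBasis i v) * H u v := by
          rw [Finset.sum_comm]
          refine Finset.sum_congr rfl fun u _ => ?_
          rw [Finset.sum_comm]
          refine Finset.sum_congr rfl fun v _ => ?_
          rw [Finset.sum_mul]
          exact Finset.sum_congr rfl fun i _ => by ring
      _ = ∑ u : V, H u u := by
          refine Finset.sum_congr rfl fun u _ => ?_
          simp [hcomp, ite_mul]
      _ = 0 := by simp [hdiag0]
  have hlamH0 : 0 ≤ hermH.eigenvalues i₀ := by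
    by_contra hcon
    push_neg at hcon
    have h1 : ∑ i, hermH.eigenvalues i ≤ ∑ _i : V, hermH.eigenvalues i₀ :=
      Finset.sum_le_sum fun i _ => hi₀ i
    rw [hsum_eig, Finset.sum_const, Finset.card_univ, nsmul_eq_mul] at h1
    have hcard : 0 < (Fintype.card V : ℝ) := by
      exact_mod_cast Fintype.card_pos
    nlinarith
  -- the nonnegative unit test vector
  set x : EuclideanSpace ℝ V := WithLp.toLp 2 (fun u => |hermH.eigenvectorBasis i₀ u| : V → ℝ) with hxdef
  have hx0 : ∀ u, 0 ≤ x u := fun u => abs_nonneg _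
  have horthH := hermH.eigenvectorBasis.orthonormal
  rw [orthonormal_iff_ite] at horthH
  have hb1 : ∑ u, hermH.eigenvectorBasis i₀ u * hermH.eigenvectorBasis i₀ u = 1 := by
    rw [← sum_sq_inner hermH (hermH.eigenvectorBasis i₀)]
    simp [horthH]
  have hx1 : ∑ u, x u * x u = 1 := by
    calc ∑ u, x u * x u
        = ∑ u, hermH.eigenvectorBasis i₀ u * hermH.eigenvectorBasis i₀ u :=
          Finset.sum_congr rfl fun u _ => abs_mul_abs_self _
      _ = 1 := hb1
  -- step 1 : λ₁(H) ≤ quadratic form of H at x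
  have hs1 : hermH.eigenvalues i₀ ≤ ∑ u, ∑ v, x u * H u v * x v := by
    rw [← quad_basis hermH i₀]
    refine Finset.sum_le_sum fun u _ => Finset.sum_le_sum fun v _ => ?_
    calc hermH.eigenvectorBasis i₀ u * H u v * hermH.eigenvectorBasis i₀ v
        ≤ |hermH.eigenvectorBasis i₀ u * H u v * hermH.eigenvectorBasis i₀ v| := le_abs_self _
      _ = x u * H u v * x v := by
          rw [abs_mul, abs_mul, abs_of_nonneg (hH0 u v)]
  -- step 2 : Jensen
  have hsum_c : ∑ i, (⟪hermH.eigenvectorBasis i, x⟫_ℝ) ^ 2 = 1 :=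
    (sum_sq_inner hermH x).trans hx1
  have hs2 : (∑ u, ∑ v, x u * H u v * x v) ^ (2 * r)
      ≤ ∑ u, ∑ v, x u * (H ^ (2 * r)) u v * x v := by
    have hq1 := quad_eq hermH 1 x
    simp only [pow_one] at hq1
    rw [hq1, quad_eq hermH (2 * r) x]
    have hconv : ConvexOn ℝ Set.univ fun t : ℝ => t ^ (2 * r) :=
      (even_two_mul r).convexOn_pow
    calc (∑ i, hermH.eigenvalues i * (⟪hermH.eigenvectorBasis i, x⟫_ℝ) ^ 2) ^ (2 * r)
        = (∑ i, ((⟪hermH.eigenvectorBasis i, x⟫_ℝ) ^ 2) • hermH.eigenvalues i) ^ (2 * r) := by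
          simp only [smul_eq_mul]; rw [Finset.sum_congr rfl fun i _ => mul_comm _ _]
      _ ≤ ∑ i, ((⟪hermH.eigenvectorBasis i, x⟫_ℝ) ^ 2) • (hermH.eigenvalues i ^ (2 * r)) :=
          hconv.map_sum_le (fun i _ => sq_nonneg _) hsum_c (fun i _ => Set.mem_univ _)
      _ = ∑ i, hermH.eigenvalues i ^ (2 * r) * (⟪hermH.eigenvectorBasis i, x⟫_ℝ) ^ 2 := by
          simp only [smul_eq_mul]; exact Finset.sum_congr rfl fun i _ => mul_comm _ _
  -- the diagonal gap
  have hdiag : ∀ u : V, (H ^ (2 * r)) u u + wmin ^ (2 * r) ≤ (A ^ (2 * r)) u u := by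
    intro u
    obtain ⟨s, hsS, hreach, hdist⟩ := hnet u
    obtain ⟨t, hst⟩ := hnoiso s
    obtain ⟨p, hp⟩ := hreach.exists_walk_length_eq_dist
    have hdr : p.length ≤ r := hp ▸ hdist
    set f : ℕ → V := fun i => if i ≤ p.length then p.getVert i
      else if (i - p.length) % 2 = 0 then s else t with hf
    have hf0 : f 0 = u := by simp [hf]
    have hfd : f p.length = s := by simp [hf]
    have hadjf : ∀ i, i < r → G.Adj (f i) (f (i + 1)) := by
      intro i hi
      by_cases h1 : i + 1 ≤ p.length
      · have h0 : i ≤ p.length := Nat.le_of_succ_le h1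
        simp only [hf, if_pos h0, if_pos h1]
        exact p.adj_getVert_succ (Nat.lt_of_succ_le h1)
      · by_cases h0 : i ≤ p.length
        · have hieq : i = p.length := le_antisymm h0 (by omega)
          have hfi : f i = s := by rw [hieq, hfd]
          have hfi1 : f (i + 1) = t := by
            simp only [hf, if_neg h1]
            rw [hieq]
            simp
          rw [hfi, hfi1]; exact hst
        · have hsub : i + 1 - p.length = (i - p.length) + 1 := by omega
          rcases Nat.even_or_odd (i - p.length) with he | ho
          · have h2 : (i - p.length) % 2 = 0 := Nat.even_iff.mp he
            have h3 : (i + 1 - p.length) % 2 = 1 := by omega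
            have hfi : f i = s := by simp only [hf, if_neg h0, if_pos h2]
            have hfi1 : f (i + 1) = t := by
              simp only [hf, if_neg (by omega : ¬ i + 1 ≤ p.length)]; rw [h3]; simp
            rw [hfi, hfi1]; exact hst
          · have h2 : (i - p.length) % 2 = 1 := Nat.odd_iff.mp ho
            have h3 : (i + 1 - p.length) % 2 = 0 := by omega
            have hfi : f i = t := by simp only [hf, if_neg h0]; rw [h2]; simp
            have hfi1 : f (i + 1) = s := by
              simp only [hf, if_neg (by omega : ¬ i + 1 ≤ p.length), if_pos h3]
            rw [hfi, hfi1]; exact hst.symm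
    have hAstep : ∀ i, i < r → wmin ≤ A (f i) (f (i + 1)) := by
      intro i hi
      rw [hAe, if_pos (hadjf i hi)]
      exact (hrange _ _ (hadjf i hi)).1
    have hprodA : wmin ^ r ≤ ∏ i ∈ Finset.range r, A (f i) (f (i + 1)) := by
      calc wmin ^ r = ∏ _i ∈ Finset.range r, wmin := by
            rw [Finset.prod_const, Finset.card_range]
        _ ≤ _ := Finset.prod_le_prod (fun i _ => hwmin.le)
            (fun i hi => hAstep i (Finset.mem_range.mp hi))
    have hprodH : ∏ i ∈ Finset.range r, H (f i) (f (i + 1)) = 0 := by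
      by_cases hd0 : p.length = 0
      · refine Finset.prod_eq_zero (Finset.mem_range.mpr hr) ?_
        have hus : u = s := SimpleGraph.Walk.eq_of_length_eq_zero hd0
        rw [hHe, if_pos (Or.inl (by rw [hf0, hus]; exact hsS))]
      · refine Finset.prod_eq_zero (i := p.length - 1) (Finset.mem_range.mpr (by omega)) ?_
        have hll : p.length - 1 + 1 = p.length := by omega
        rw [hHe, if_pos (Or.inr (by rw [hll, hfd]; exact hsS))]
    have hgap := gap_le hH0 hHA r f
    rw [hprodH, hf0, add_zero] at hgap
    set z := f r with hz
    have h1 : (H ^ r) u z + wmin ^ r ≤ (A ^ r) u z := by linarith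
    -- symmetry of the powers
    have hAsm : Aᵀ = A := Matrix.ext fun a b => hAsymm b a
    have hHsm : Hᵀ = H := Matrix.ext fun a b => hHsymm b a
    have hApow : ∀ a b : V, (A ^ r) a b = (A ^ r) b a := by
      intro a b
      calc (A ^ r) a b = ((A ^ r)ᵀ) b a := rfl
        _ = ((Aᵀ) ^ r) b a := by rw [Matrix.transpose_pow]
        _ = (A ^ r) b a := by rw [hAsm]
    have hHpow : ∀ a b : V, (H ^ r) a b = (H ^ r) b a := by
      intro a b
      calc (H ^ r) a b = ((H ^ r)ᵀ) b a := rfl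
        _ = ((Hᵀ) ^ r) b a := by rw [Matrix.transpose_pow]
        _ = (H ^ r) b a := by rw [hHsm]
    have hsplitA : A ^ (2 * r) = A ^ r * A ^ r := by rw [← pow_add, two_mul]
    have hsplitH : H ^ (2 * r) = H ^ r * H ^ r := by rw [← pow_add, two_mul]
    rw [hsplitA, hsplitH, Matrix.mul_apply, Matrix.mul_apply]
    have hmono := pow_entry_mono hH0 hHA r
    have hkey : (H ^ r) u z * (H ^ r) z u + wmin ^ (2 * r)
        ≤ (A ^ r) u z * (A ^ r) z u := by
      rw [hApow z u, hHpow z u]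
      have hz0 : 0 ≤ (H ^ r) u z := (hmono u z).1
      have hw2 : wmin ^ (2 * r) = wmin ^ r * wmin ^ r := by rw [two_mul, pow_add]
      have hwr : 0 < wmin ^ r := pow_pos hwmin r
      nlinarith
    have hterm : ∀ v, 0 ≤ (A ^ r) u v * (A ^ r) v u - (H ^ r) u v * (H ^ r) v u := by
      intro v
      have h1 := hmono u v
      have h2 := hmono v u
      nlinarith [h1.1, h1.2, h2.1, h2.2]
    have hsingle : (A ^ r) u z * (A ^ r) z u - (H ^ r) u z * (H ^ r) z u
        ≤ ∑ v, ((A ^ r) u v * (A ^ r) v u - (H ^ r) u v * (H ^ r) v u) :=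
      Finset.single_le_sum (f := fun v => (A ^ r) u v * (A ^ r) v u
        - (H ^ r) u v * (H ^ r) v u) (fun v _ => hterm v) (Finset.mem_univ z)
    rw [Finset.sum_sub_distrib] at hsingle
    linarith
  -- step 3 : the quadratic-form gap
  have hs3 : ∑ u, ∑ v, x u * (H ^ (2 * r)) u v * x v + wmin ^ (2 * r)
      ≤ ∑ u, ∑ v, x u * (A ^ (2 * r)) u v * x v := by
    have hmono2 := pow_entry_mono hH0 hHA (2 * r)
    have hdd : ∀ u' : V, wmin ^ (2 * r) * (x u' * x u')
        ≤ ∑ v, x u' * ((A ^ (2 * r)) u' v - (H ^ (2 * r)) u' v) * x v := by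
      intro u'
      have h1 : wmin ^ (2 * r) * (x u' * x u')
          ≤ x u' * ((A ^ (2 * r)) u' u' - (H ^ (2 * r)) u' u') * x u' := by
        nlinarith [hdiag u', mul_nonneg (hx0 u') (hx0 u'), hx0 u']
      refine le_trans h1 (Finset.single_le_sum
        (f := fun v => x u' * ((A ^ (2 * r)) u' v - (H ^ (2 * r)) u' v) * x v)
        (fun v _ => ?_) (Finset.mem_univ u'))
      have h2 := hmono2 u' v
      show 0 ≤ x u' * ((A ^ (2 * r)) u' v - (H ^ (2 * r)) u' v) * x v
      exact mul_nonneg (mul_nonneg (hx0 u') (sub_nonneg.mpr h2.2)) (hx0 v)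
    calc ∑ u, ∑ v, x u * (H ^ (2 * r)) u v * x v + wmin ^ (2 * r)
        = ∑ u, ∑ v, x u * (H ^ (2 * r)) u v * x v
            + ∑ u, wmin ^ (2 * r) * (x u * x u) := by
          rw [← Finset.mul_sum, hx1, mul_one]
      _ ≤ ∑ u, ∑ v, x u * (H ^ (2 * r)) u v * x v
            + ∑ u, ∑ v, x u * ((A ^ (2 * r)) u v - (H ^ (2 * r)) u v) * x v :=
          add_le_add_right (Finset.sum_le_sum fun u _ => hdd u) _
      _ = ∑ u, ∑ v, x u * (A ^ (2 * r)) u v * x v := by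
          rw [← Finset.sum_add_distrib]
          refine Finset.sum_congr rfl fun u _ => ?_
          rw [← Finset.sum_add_distrib]
          exact Finset.sum_congr rfl fun v _ => by ring
  -- step 4 : Rayleigh upper bound for A^(2r)
  have hs4 : ∑ u, ∑ v, x u * (A ^ (2 * r)) u v * x v ≤ hermA.eigenvalues j₀ ^ (2 * r) := by
    have hlow : ∀ i, -(hermA.eigenvalues j₀) ≤ hermA.eigenvalues i := by
      intro i
      have horthA := hermA.eigenvectorBasis.orthonormal
      rw [orthonormal_iff_ite] at horthA
      have hbi1 : ∑ u, |hermA.eigenvectorBasis i u| * |hermA.eigenvectorBasis i u| = 1 := by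
        have : ∑ u, hermA.eigenvectorBasis i u * hermA.eigenvectorBasis i u = 1 := by
          rw [← sum_sq_inner hermA (hermA.eigenvectorBasis i)]
          simp [horthA]
        calc ∑ u, |hermA.eigenvectorBasis i u| * |hermA.eigenvectorBasis i u|
            = ∑ u, hermA.eigenvectorBasis i u * hermA.eigenvectorBasis i u :=
              Finset.sum_congr rfl fun u _ => abs_mul_abs_self _
          _ = 1 := this
      have hray : ∑ u, ∑ v, |hermA.eigenvectorBasis i u| * A u v * |hermA.eigenvectorBasis i v|
          ≤ hermA.eigenvalues j₀ :=
        quad_le_max hermA hj₀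
          (WithLp.toLp 2 (fun u => |hermA.eigenvectorBasis i u|) : EuclideanSpace ℝ V) hbi1
      have habs : -(∑ u, ∑ v, |hermA.eigenvectorBasis i u| * A u v * |hermA.eigenvectorBasis i v|)
          ≤ ∑ u, ∑ v, hermA.eigenvectorBasis i u * A u v * hermA.eigenvectorBasis i v := by
        rw [← Finset.sum_neg_distrib]
        refine Finset.sum_le_sum fun u _ => ?_
        rw [← Finset.sum_neg_distrib]
        refine Finset.sum_le_sum fun v _ => ?_
        have : |hermA.eigenvectorBasis i u * A u v * hermA.eigenvectorBasis i v|
            = |hermA.eigenvectorBasis i u| * A u v * |hermA.eigenvectorBasis i v| := by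
          rw [abs_mul, abs_mul, abs_of_nonneg (hA0 u v)]
        rw [← this]
        exact neg_abs_le _
      have hqi := quad_basis hermA i
      linarith
    have hbound : ∀ i, hermA.eigenvalues i ^ (2 * r) ≤ hermA.eigenvalues j₀ ^ (2 * r) := by
      intro i
      have h1 : |hermA.eigenvalues i| ≤ hermA.eigenvalues j₀ :=
        abs_le.mpr ⟨hlow i, hj₀ i⟩
      calc hermA.eigenvalues i ^ (2 * r) = |hermA.eigenvalues i| ^ (2 * r) :=
            ((even_two_mul r).pow_abs _).symm
        _ ≤ hermA.eigenvalues j₀ ^ (2 * r) := pow_le_pow_left₀ (abs_nonneg _) h1 _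
    rw [quad_eq hermA (2 * r) x]
    calc ∑ i, hermA.eigenvalues i ^ (2 * r) * (⟪hermA.eigenvectorBasis i, x⟫_ℝ) ^ 2
        ≤ ∑ i, hermA.eigenvalues j₀ ^ (2 * r) * (⟪hermA.eigenvectorBasis i, x⟫_ℝ) ^ 2 :=
          Finset.sum_le_sum fun i _ =>
            mul_le_mul_of_nonneg_right (hbound i) (sq_nonneg _)
      _ = hermA.eigenvalues j₀ ^ (2 * r) * ∑ i, (⟪hermA.eigenvectorBasis i, x⟫_ℝ) ^ 2 := by
          rw [Finset.mul_sum]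
      _ = hermA.eigenvalues j₀ ^ (2 * r) := by
          rw [sum_sq_inner hermA x, hx1, mul_one]
  -- conclude
  rw [hlamH, hlamA]
  have hfinal : hermH.eigenvalues i₀ ^ (2 * r) ≤ (∑ u, ∑ v, x u * H u v * x v) ^ (2 * r) :=
    pow_le_pow_left₀ hlamH0 hs1 _
  linarith
end

section
/- Let G be a finite edge-weighted graph with nonnegative edge weights and weighted adjacency matrix A_G, and let r be a positive integer. Then the sum over all eigenvalues λ_i of A_G of λ_i^{2r} is at most the sum over all vertices v of λ₁(B_G(v,r))^{2r}, where B_G(v,r) is the subgraph induced by vertices at graph distance at most r from v. -/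
open scoped Classical
open scoped Matrix

set_option linter.unusedSectionVars false

/-- The weighted adjacency matrix of the ball of radius `r` around `v`,
viewed as a matrix on all of `V` padded with zeros. -/
noncomputable def ballMat {V : Type*} [Fintype V] [DecidableEq V]
    (G : SimpleGraph V) (A : Matrix V V ℝ) (v : V) (r : ℕ) : Matrix V V ℝ :=
  fun a b =>
    if (G.Reachable v a ∧ G.dist v a ≤ r) ∧ (G.Reachable v b ∧ G.dist v b ≤ r) then A a b else 0

section Aux

variable {V : Type*} [Fintype V] [DecidableEq V]

lemma herm_spectral (M : Matrix V V ℝ) (hM : M.IsHermitian) :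
    M = (hM.eigenvectorUnitary : Matrix V V ℝ) * Matrix.diagonal hM.eigenvalues
      * star (hM.eigenvectorUnitary : Matrix V V ℝ) := by
  have := hM.spectral_theorem
  simpa [RCLike.ofReal_real_eq_id] using this

lemma herm_pow_spectral (M : Matrix V V ℝ) (hM : M.IsHermitian) (k : ℕ) :
    M ^ k = (hM.eigenvectorUnitary : Matrix V V ℝ) * Matrix.diagonal (fun i => hM.eigenvalues i ^ k)
      * star (hM.eigenvectorUnitary : Matrix V V ℝ) := by
  have h1 : (hM.eigenvectorUnitary : Matrix V V ℝ) * star (hM.eigenvectorUnitary : Matrix V V ℝ) = 1 :=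
    Matrix.mem_unitaryGroup_iff.mp hM.eigenvectorUnitary.2
  have h2 : star (hM.eigenvectorUnitary : Matrix V V ℝ) * (hM.eigenvectorUnitary : Matrix V V ℝ) = 1 :=
    Matrix.mem_unitaryGroup_iff'.mp hM.eigenvectorUnitary.2
  induction k with
  | zero => simp [pow_zero, Matrix.diagonal_one, h1]
  | succ k ih =>
    have step : M ^ (k+1) = ((hM.eigenvectorUnitary : Matrix V V ℝ) * Matrix.diagonal (fun i => hM.eigenvalues i ^ k)
        * star (hM.eigenvectorUnitary : Matrix V V ℝ)) * ((hM.eigenvectorUnitary : Matrix V V ℝ) * Matrix.diagonal hM.eigenvalues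
        * star (hM.eigenvectorUnitary : Matrix V V ℝ)) := by
      rw [pow_succ, ih]; congr 1; exact herm_spectral M hM
    rw [step]
    rw [show ∀ (U D1 D2 W : Matrix V V ℝ), U * D1 * W * (U * D2 * W) = U * (D1 * (W * U) * D2) * W by
      intros; noncomm_ring]
    rw [h2, mul_one, Matrix.diagonal_mul_diagonal]
    simp only [← pow_succ]

lemma eig_le_lam1 (M : Matrix V V ℝ) (hM : M.IsHermitian) (j : V) :
    hM.eigenvalues j ≤ lam1 M := by
  unfold lam1
  rw [hM.spectrum_real_eq_range_eigenvalues]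
  exact le_csSup (Set.finite_range _).bddAbove ⟨j, rfl⟩

lemma vecMul_star_eq (U : Matrix V V ℝ) (x : V → ℝ) :
    Matrix.vecMul x U = star U *ᵥ x := by
  funext j
  simp [Matrix.vecMul, Matrix.mulVec, dotProduct, Matrix.conjTranspose_apply, mul_comm]

lemma rayleigh_decomp (M : Matrix V V ℝ) (hM : M.IsHermitian) (x : V → ℝ) :
    x ⬝ᵥ (M *ᵥ x) = ∑ j, hM.eigenvalues j * ((star (hM.eigenvectorUnitary : Matrix V V ℝ) *ᵥ x) j)^2 ∧
    x ⬝ᵥ x = ∑ j, ((star (hM.eigenvectorUnitary : Matrix V V ℝ) *ᵥ x) j)^2 := by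
  set U := (hM.eigenvectorUnitary : Matrix V V ℝ) with hU
  have h1 : U * star U = 1 := Matrix.mem_unitaryGroup_iff.mp hM.eigenvectorUnitary.2
  set y := star U *ᵥ x with hy
  have key : ∀ z : V → ℝ, x ⬝ᵥ (U *ᵥ z) = y ⬝ᵥ z := by
    intro z
    rw [Matrix.dotProduct_mulVec, vecMul_star_eq]
  constructor
  · have hMx : M *ᵥ x = U *ᵥ (Matrix.diagonal hM.eigenvalues *ᵥ y) := by
      conv_lhs => rw [herm_spectral M hM]
      rw [← hU, ← Matrix.mulVec_mulVec, ← Matrix.mulVec_mulVec]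
    rw [hMx, key]
    simp [Matrix.mulVec_diagonal, dotProduct, pow_two]
    ring_nf
    exact Finset.sum_congr rfl fun j _ => by ring
  · have hx : x ⬝ᵥ x = y ⬝ᵥ y := by
      have : (1 : Matrix V V ℝ) *ᵥ x = x := Matrix.one_mulVec x
      calc x ⬝ᵥ x = x ⬝ᵥ (U *ᵥ (star U *ᵥ x)) := by
            rw [Matrix.mulVec_mulVec, h1, Matrix.one_mulVec]
        _ = y ⬝ᵥ y := key _
    rw [hx]
    simp [dotProduct, pow_two]

lemma rayleigh_le (M : Matrix V V ℝ) (hM : M.IsHermitian) (x : V → ℝ) :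
    x ⬝ᵥ (M *ᵥ x) ≤ lam1 M * (x ⬝ᵥ x) := by
  obtain ⟨h1, h2⟩ := rayleigh_decomp M hM x
  rw [h1, h2, Finset.mul_sum]
  exact Finset.sum_le_sum fun j _ => mul_le_mul_of_nonneg_right (eig_le_lam1 M hM j) (sq_nonneg _)

lemma abs_eig_le (M : Matrix V V ℝ) (hM : M.IsHermitian) (hnn : ∀ a b, 0 ≤ M a b) (j : V) :
    |hM.eigenvalues j| ≤ lam1 M := by
  set x : V → ℝ := ⇑(hM.eigenvectorBasis j) with hxdef
  have hx1 : x ⬝ᵥ x = 1 := by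
    have h := hM.eigenvectorBasis.orthonormal.1 j
    have h2 : (x ⬝ᵥ x) = ‖hM.eigenvectorBasis j‖ ^ 2 := by
      rw [← real_inner_self_eq_norm_sq]
      simp only [dotProduct, PiLp.inner_apply, RCLike.inner_apply, conj_trivial, hxdef]
    rw [h2, h]; norm_num
  have heig : M *ᵥ x = hM.eigenvalues j • x := hM.mulVec_eigenvectorBasis j
  have hval : x ⬝ᵥ (M *ᵥ x) = hM.eigenvalues j := by
    rw [heig, dotProduct_smul, hx1, smul_eq_mul, mul_one]
  have habs : |x ⬝ᵥ (M *ᵥ x)| ≤ (fun a => |x a|) ⬝ᵥ (M *ᵥ fun a => |x a|) := by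
    calc |x ⬝ᵥ (M *ᵥ x)| ≤ ∑ a, |x a * (M *ᵥ x) a| := Finset.abs_sum_le_sum_abs _ _
      _ ≤ ∑ a, |x a| * ∑ b, M a b * |x b| := by
          refine Finset.sum_le_sum fun a _ => ?_
          rw [abs_mul]
          refine mul_le_mul_of_nonneg_left ?_ (abs_nonneg _)
          calc |(M *ᵥ x) a| ≤ ∑ b, |M a b * x b| := Finset.abs_sum_le_sum_abs _ _
            _ = ∑ b, M a b * |x b| := Finset.sum_congr rfl fun b _ => by
                rw [abs_mul, abs_of_nonneg (hnn a b)]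
      _ = (fun a => |x a|) ⬝ᵥ (M *ᵥ fun a => |x a|) := by
          simp [dotProduct, Matrix.mulVec]
  have habs2 : ((fun a => |x a|) ⬝ᵥ fun a => |x a|) = 1 := by
    have : ∀ a, |x a| * |x a| = x a * x a := fun a => abs_mul_abs_self _
    unfold dotProduct
    rw [Finset.sum_congr rfl fun a _ => this a]
    exact hx1
  have hray := rayleigh_le M hM (fun a => |x a|)
  rw [habs2, mul_one] at hray
  calc |hM.eigenvalues j| = |x ⬝ᵥ (M *ᵥ x)| := by rw [hval]
    _ ≤ (fun a => |x a|) ⬝ᵥ (M *ᵥ fun a => |x a|) := habs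
    _ ≤ lam1 M := hray

lemma diag_pow_le (M : Matrix V V ℝ) (hM : M.IsHermitian) (hnn : ∀ a b, 0 ≤ M a b)
    (r : ℕ) (v : V) : (M ^ (2 * r)) v v ≤ lam1 M ^ (2 * r) := by
  set U := (hM.eigenvectorUnitary : Matrix V V ℝ) with hU
  have h1 : U * star U = 1 := Matrix.mem_unitaryGroup_iff.mp hM.eigenvectorUnitary.2
  have hsum : ∑ j, U v j * U v j = 1 := by
    have := congrFun (congrFun h1 v) v
    rw [Matrix.mul_apply] at this
    simpa [Matrix.conjTranspose_apply] using this
  have hentry : (M ^ (2 * r)) v v = ∑ j, hM.eigenvalues j ^ (2 * r) * (U v j * U v j) := by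
    rw [herm_pow_spectral M hM (2 * r), ← hU, Matrix.mul_apply]
    refine Finset.sum_congr rfl fun j _ => ?_
    rw [Matrix.mul_diagonal]
    simp [Matrix.conjTranspose_apply]
    ring
  rw [hentry]
  calc ∑ j, hM.eigenvalues j ^ (2 * r) * (U v j * U v j)
      ≤ ∑ j, lam1 M ^ (2 * r) * (U v j * U v j) := by
        refine Finset.sum_le_sum fun j _ => ?_
        refine mul_le_mul_of_nonneg_right ?_ (mul_self_nonneg _)
        rw [← Even.pow_abs (even_two_mul r)]
        exact pow_le_pow_left₀ (abs_nonneg _) (abs_eig_le M hM hnn j) _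
    _ = lam1 M ^ (2 * r) := by rw [← Finset.mul_sum, hsum, mul_one]


lemma dist_succ_le {G : SimpleGraph V} {v b a : V} {k : ℕ}
    (hreach : G.Reachable v b) (hdist : G.dist v b ≤ k) (hadj : G.Adj b a) :
    G.dist v a ≤ k + 1 := by
  obtain ⟨p, hp⟩ := hreach.exists_walk_length_eq_dist
  have h := SimpleGraph.dist_le (p.concat hadj)
  rw [SimpleGraph.Walk.length_concat, hp] at h
  omega

lemma loc (G : SimpleGraph V) (A : Matrix V V ℝ)
    (hadj : ∀ a b, A a b ≠ 0 → G.Adj a b)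
    (v : V) (r : ℕ) : ∀ k, k ≤ r → ∀ a : V,
    (A ^ k) a v = (ballMat G A v r ^ k) a v ∧
      ((A ^ k) a v ≠ 0 → G.Reachable v a ∧ G.dist v a ≤ k) := by
  intro k
  induction k with
  | zero =>
    intro _ a
    simp only [pow_zero]
    refine ⟨trivial, fun h => ?_⟩
    have hav : a = v := by
      by_contra hne
      exact h (Matrix.one_apply_ne hne)
    subst hav
    exact ⟨SimpleGraph.Reachable.refl a, by simp⟩
  | succ k ih =>
    intro hk a
    have hk' : k ≤ r := by omega
    rw [pow_succ', pow_succ', Matrix.mul_apply, Matrix.mul_apply]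
    constructor
    · refine Finset.sum_congr rfl fun b _ => ?_
      by_cases h0 : (A ^ k) b v = 0
      · rw [← (ih hk' b).1, h0, mul_zero, mul_zero]
      · obtain ⟨hreach, hdist⟩ := (ih hk' b).2 h0
        rw [← (ih hk' b).1]
        congr 1
        by_cases hA0 : A a b = 0
        · simp only [ballMat]
          split <;> simp [hA0]
        · have hGadj := hadj a b hA0
          have hra : G.Reachable v a := hreach.trans hGadj.symm.reachable
          have hda : G.dist v a ≤ k + 1 := dist_succ_le hreach hdist hGadj.symm
          simp only [ballMat]
          rw [if_pos ⟨⟨hra, le_trans hda hk⟩, ⟨hreach, le_trans hdist hk'⟩⟩]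
    · intro hne
      obtain ⟨b, _, hprod⟩ := Finset.exists_ne_zero_of_sum_ne_zero hne
      have hA0 : A a b ≠ 0 := fun h => hprod (by rw [h, zero_mul])
      have hk0 : (A ^ k) b v ≠ 0 := fun h => hprod (by rw [h, mul_zero])
      obtain ⟨hreach, hdist⟩ := (ih hk' b).2 hk0
      have hGadj := hadj a b hA0
      exact ⟨hreach.trans hGadj.symm.reachable, dist_succ_le hreach hdist hGadj.symm⟩

lemma herm_entry {M : Matrix V V ℝ} (hM : M.IsHermitian) (a b : V) : M a b = M b a := by
  have := congrFun (congrFun hM b) a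
  simpa [Matrix.conjTranspose_apply] using this


end Aux

/-- Local-global spectral comparison: the sum of the `2r`-th powers of the
eigenvalues of a weighted adjacency matrix is at most the sum over vertices of
the `2r`-th power of the largest eigenvalue of the radius-`r` ball. -/
theorem stmt2 {V : Type*} [Fintype V] [DecidableEq V] [Nonempty V]
    (G : SimpleGraph V) (w : V → V → ℝ)
    (hsymm : ∀ u v, w u v = w v u)
    (hw0 : ∀ u v, 0 ≤ w u v)
    (A : Matrix V V ℝ)
    (hA : A = fun u v => if G.Adj u v then w u v else 0)
    (hAh : A.IsHermitian)
    (r : ℕ) (hr : 0 < r) :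
    ∑ i, hAh.eigenvalues i ^ (2 * r) ≤ ∑ v, lam1 (ballMat G A v r) ^ (2 * r) := by
  have hAnn : ∀ a b, 0 ≤ A a b := by
    intro a b; rw [hA]; dsimp only; split
    · exact hw0 a b
    · exact le_rfl
  have hadj : ∀ a b, A a b ≠ 0 → G.Adj a b := by
    intro a b h
    by_contra hc
    rw [hA] at h; simp [hc] at h
  have hBh : ∀ v : V, (ballMat G A v r).IsHermitian := by
    intro v
    show (ballMat G A v r)ᴴ = ballMat G A v r
    ext a b
    simp only [Matrix.conjTranspose_apply, ballMat, star_trivial]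
    exact if_congr and_comm (herm_entry hAh b a) rfl
  have hBnn : ∀ v a b, 0 ≤ ballMat G A v r a b := by
    intro v a b
    simp only [ballMat]
    split
    · exact hAnn a b
    · exact le_rfl
  -- trace identity
  have h2' : star (hAh.eigenvectorUnitary : Matrix V V ℝ) * (hAh.eigenvectorUnitary : Matrix V V ℝ) = 1 :=
    Matrix.mem_unitaryGroup_iff'.mp hAh.eigenvectorUnitary.2
  have htr : ∑ i, hAh.eigenvalues i ^ (2 * r) = Matrix.trace (A ^ (2 * r)) := by
    rw [herm_pow_spectral A hAh (2 * r), Matrix.trace_mul_cycle, h2', one_mul,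
      Matrix.trace_diagonal]
  have hdiag : Matrix.trace (A ^ (2 * r)) = ∑ v, (A ^ (2 * r)) v v := by
    simp [Matrix.trace, Matrix.diag]
  have hloc : ∀ v : V, (A ^ (2 * r)) v v = (ballMat G A v r ^ (2 * r)) v v := by
    intro v
    rw [two_mul, pow_add, pow_add, Matrix.mul_apply, Matrix.mul_apply]
    refine Finset.sum_congr rfl fun b _ => ?_
    rw [herm_entry (hAh.pow r) v b, herm_entry ((hBh v).pow r) v b,
      (loc G A hadj v r r le_rfl b).1]
  rw [htr, hdiag]
  calc ∑ v, (A ^ (2 * r)) v v = ∑ v, (ballMat G A v r ^ (2 * r)) v v :=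
        Finset.sum_congr rfl fun v _ => hloc v
    _ ≤ ∑ v, lam1 (ballMat G A v r) ^ (2 * r) :=
        Finset.sum_le_sum fun v _ => diag_pow_le _ (hBh v) (hBnn v) r v
end

section
/- Let G be a connected n-vertex graph that is a c-expander, meaning every vertex set S with |S| ≤ n/2 has at least c|S| vertices outside S adjacent to S. Then for every p ∈ [0,1] and every positive integer r with r ≤ c^{-1} log(n/2), there exists an r-net of G of size at most ((1−p)^{(1+c)^r} + p)·n. -/
open scoped Classical

private lemma binom_aux {V : Type*} [DecidableEq V] (A : Finset V) (p q : ℝ) :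
    ∑ S ∈ A.powerset, p ^ S.card * q ^ (A.card - S.card) = (p + q) ^ A.card := by
  have h := Finset.prod_add (fun _ : V => p) (fun _ : V => q) A
  simp only [Finset.prod_const] at h
  calc ∑ S ∈ A.powerset, p ^ S.card * q ^ (A.card - S.card)
      = ∑ S ∈ A.powerset, p ^ S.card * q ^ ((A \ S).card) :=
        Finset.sum_congr rfl fun S hS => by
          rw [Finset.card_sdiff_of_subset (Finset.mem_powerset.mp hS)]
    _ = (p + q) ^ A.card := h.symm

/-- Selecting a small net in an expander: a connected `n`-vertex `c`-expander
has, for every `p ∈ [0,1]` and positive integer `r ≤ c⁻¹ log(n/2)`, an `r`-net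
of size at most `((1-p)^{(1+c)^r} + p) n`. -/
theorem stmt5 {V : Type*} [Fintype V] [DecidableEq V]
    (G : SimpleGraph V) (hconn : G.Connected)
    (c : ℝ) (hc0 : 0 < c) (hc1 : c ≤ 1)
    (hexp : ∀ S : Finset V, (S.card : ℝ) ≤ (Fintype.card V : ℝ) / 2 →
      c * S.card ≤
        ((Finset.univ.filter fun v => v ∉ S ∧ ∃ u ∈ S, G.Adj v u).card : ℝ))
    (p : ℝ) (hp : p ∈ Set.Icc (0 : ℝ) 1)
    (r : ℕ) (hr : 0 < r)
    (hrc : (r : ℝ) ≤ c⁻¹ * Real.log ((Fintype.card V : ℝ) / 2)) :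
    ∃ W : Finset V, (∀ v : V, ∃ s ∈ W, G.dist v s ≤ r) ∧
      (W.card : ℝ) ≤ ((1 - p) ^ (((1 + c) ^ r : ℝ)) + p) * Fintype.card V := by
  classical
  obtain ⟨hp0, hp1⟩ := hp
  set n := Fintype.card V with hn
  have hn1 : 1 ≤ n := Fintype.card_pos_iff.mpr hconn.nonempty
  have hn0 : (0:ℝ) < n := by exact_mod_cast hn1
  set q : ℝ := 1 - p with hqdef
  have hq0 : 0 ≤ q := by simp [hqdef]; linarith
  have hq1 : q ≤ 1 := by simp [hqdef]; linarith
  -- balls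
  set ball : ℕ → V → Finset V :=
    fun k v => Finset.univ.filter fun u => G.dist v u ≤ k with hballdef
  have hball_self : ∀ k v, v ∈ ball k v := fun k v => by
    simp [hballdef, SimpleGraph.dist_self]
  have hball_mono : ∀ k v, ball k v ⊆ ball (k+1) v := fun k v u hu => by
    simp only [hballdef, Finset.mem_filter] at hu ⊢
    exact ⟨hu.1, hu.2.trans (by omega)⟩
  -- growth
  have hgrow : ∀ (k : ℕ) (v : V), ((ball k v).card : ℝ) ≤ (n:ℝ)/2 →
      (1 + c) * ((ball k v).card : ℝ) ≤ ((ball (k+1) v).card : ℝ) := by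
    intro k v hle
    set N := Finset.univ.filter fun x => x ∉ ball k v ∧ ∃ u ∈ ball k v, G.Adj x u with hNdef
    have hNB : Disjoint (ball k v) N := by
      rw [Finset.disjoint_left]
      intro a haB haN
      simp only [hNdef, Finset.mem_filter] at haN
      exact haN.2.1 haB
    have hNsub : N ⊆ ball (k+1) v := by
      intro x hx
      simp only [hNdef, Finset.mem_filter] at hx
      obtain ⟨-, -, u, huB, hadj⟩ := hx
      simp only [hballdef, Finset.mem_filter] at huB ⊢
      obtain ⟨-, huB⟩ := huB
      refine ⟨Finset.mem_univ _, ?_⟩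
      have h1 : G.dist v x ≤ G.dist v u + G.dist u x := hconn.dist_triangle
      have h2 : G.dist u x ≤ 1 := by
        have := SimpleGraph.dist_le (SimpleGraph.Walk.cons hadj.symm SimpleGraph.Walk.nil)
        simpa using this
      omega
    have hunion : ball k v ∪ N ⊆ ball (k+1) v :=
      Finset.union_subset (hball_mono k v) hNsub
    have hcard : ((ball k v ∪ N).card : ℝ) = (ball k v).card + N.card := by
      rw [Finset.card_union_of_disjoint hNB]; push_cast; ring
    have h1 : c * ((ball k v).card : ℝ) ≤ N.card := hexp (ball k v) hle
    have h2 : ((ball k v ∪ N).card : ℝ) ≤ ((ball (k+1) v).card : ℝ) := by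
      exact_mod_cast Finset.card_le_card hunion
    rw [hcard] at h2
    linarith
  -- (1+c)^r ≤ n/2
  have hcr : ((1+c):ℝ) ^ r ≤ (n:ℝ)/2 := by
    have h1 : ((1+c):ℝ) ^ r ≤ Real.exp c ^ r := by
      apply pow_le_pow_left₀ (by linarith)
      have := Real.add_one_le_exp c
      linarith
    have h2 : Real.exp c ^ r = Real.exp ((r:ℝ) * c) := (Real.exp_nat_mul c r).symm
    have h3 : (r:ℝ) * c ≤ Real.log ((n:ℝ)/2) := by
      have := mul_le_mul_of_nonneg_left hrc (le_of_lt hc0)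
      rw [← mul_assoc, mul_inv_cancel₀ (ne_of_gt hc0), one_mul] at this
      linarith [this]
    have hn2 : (0:ℝ) < (n:ℝ)/2 := by linarith
    calc ((1+c):ℝ) ^ r ≤ Real.exp ((r:ℝ) * c) := by rw [← h2]; exact h1
      _ ≤ Real.exp (Real.log ((n:ℝ)/2)) := Real.exp_le_exp.mpr h3
      _ = (n:ℝ)/2 := Real.exp_log hn2
  -- ball size lower bound
  have hsize : ∀ v : V, ((1+c):ℝ) ^ r ≤ ((ball r v).card : ℝ) := by
    intro v
    have key : ∀ k : ℕ, k ≤ r → ((1+c):ℝ) ^ k ≤ ((ball k v).card : ℝ) := by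
      intro k
      induction k with
      | zero =>
        intro _
        have : 1 ≤ (ball 0 v).card := Finset.card_pos.mpr ⟨v, hball_self 0 v⟩
        simpa using (by exact_mod_cast this : (1:ℝ) ≤ ((ball 0 v).card : ℝ))
      | succ k ih =>
        intro hk1
        have hk : k ≤ r := by omega
        have ihk := ih hk
        by_cases hhalf : ((ball k v).card : ℝ) ≤ (n:ℝ)/2
        · have := hgrow k v hhalf
          calc ((1+c):ℝ) ^ (k+1) = (1+c) * (1+c)^k := by ring
            _ ≤ (1+c) * ((ball k v).card : ℝ) := by
                apply mul_le_mul_of_nonneg_left ihk; linarith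
            _ ≤ ((ball (k+1) v).card : ℝ) := this
        · push_neg at hhalf
          have hmono : ((ball k v).card : ℝ) ≤ ((ball (k+1) v).card : ℝ) := by
            exact_mod_cast Finset.card_le_card (hball_mono k v)
          have hpw : ((1+c):ℝ) ^ (k+1) ≤ ((1+c):ℝ) ^ r :=
            pow_le_pow_right₀ (by linarith) hk1
          linarith
    exact key r le_rfl
  -- the weight function
  set w : Finset V → ℝ := fun S => p ^ S.card * q ^ (n - S.card) with hwdef
  have hw0 : ∀ S, 0 ≤ w S := fun S =>
    mul_nonneg (pow_nonneg hp0 _) (pow_nonneg hq0 _)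
  -- key: probability of avoiding a set B
  have key : ∀ B : Finset V,
      ∑ S : Finset V, (if Disjoint B S then w S else 0) = q ^ B.card := by
    intro B
    rw [← Finset.sum_filter]
    have hfil : Finset.univ.filter (fun S : Finset V => Disjoint B S) = Bᶜ.powerset := by
      ext S
      simp only [Finset.mem_filter, Finset.mem_univ, true_and, Finset.mem_powerset]
      constructor
      · intro h
        intro x hx
        simp only [Finset.mem_compl]
        exact fun hxB => (Finset.disjoint_left.mp h) hxB hx
      · intro h
        rw [Finset.disjoint_left]
        intro a haB haS
        have := h haS
        simp only [Finset.mem_compl] at this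
        exact this haB
    rw [hfil]
    have hcompl : Bᶜ.card = n - B.card := Finset.card_compl B
    have hstep : ∀ S ∈ Bᶜ.powerset, w S = (p ^ S.card * q ^ (Bᶜ.card - S.card)) * q ^ B.card := by
      intro S hS
      have hSle : S.card ≤ Bᶜ.card := Finset.card_le_card (Finset.mem_powerset.mp hS)
      have hBle : B.card ≤ n := Finset.card_le_card (Finset.subset_univ B)
      have harith : n - S.card = (Bᶜ.card - S.card) + B.card := by omega
      simp only [hwdef]
      rw [harith, pow_add]
      ring
    rw [Finset.sum_congr rfl hstep, ← Finset.sum_mul, binom_aux]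
    have : p + q = 1 := by simp [hqdef]
    rw [this, one_pow, one_mul]
  -- total mass 1
  have hsum1 : ∑ S : Finset V, w S = 1 := by
    have := key ∅
    simpa using this
  -- probability that v ∈ S
  have hmem : ∀ v : V, ∑ S : Finset V, (if v ∈ S then w S else 0) = p := by
    intro v
    have h1 := key {v}
    have h2 : ∀ S : Finset V, (if v ∈ S then w S else 0) =
        w S - (if Disjoint {v} S then w S else 0) := by
      intro S
      by_cases hv : v ∈ S
      · rw [if_pos hv, if_neg, sub_zero]
        rw [Finset.not_disjoint_iff]
        exact ⟨v, Finset.mem_singleton_self v, hv⟩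
      · rw [if_neg hv, if_pos, sub_self]
        simpa using hv
    rw [Finset.sum_congr rfl (fun S _ => h2 S), Finset.sum_sub_distrib, hsum1, h1]
    simp [hqdef]
  -- D S : vertices whose ball misses S
  set D : Finset V → Finset V :=
    fun S => Finset.univ.filter fun v => Disjoint (ball r v) S with hDdef
  -- expectation of |S|
  have ES : ∑ S : Finset V, w S * (S.card : ℝ) = p * n := by
    have hcard : ∀ S : Finset V, (S.card : ℝ) = ∑ v : V, (if v ∈ S then (1:ℝ) else 0) := by
      intro S
      rw [Finset.sum_ite_mem]
      simp [Finset.univ_inter]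
    calc ∑ S : Finset V, w S * (S.card : ℝ)
        = ∑ S : Finset V, ∑ v : V, (if v ∈ S then w S else 0) := by
          apply Finset.sum_congr rfl
          intro S _
          rw [hcard S, Finset.mul_sum]
          apply Finset.sum_congr rfl
          intro v _
          by_cases hv : v ∈ S <;> simp [hv]
      _ = ∑ v : V, ∑ S : Finset V, (if v ∈ S then w S else 0) := Finset.sum_comm
      _ = ∑ v : V, p := Finset.sum_congr rfl fun v _ => hmem v
      _ = p * n := by simp [mul_comm, hn]
  -- expectation of |D S|
  set m : ℝ := ((1+c):ℝ) ^ r with hmdef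
  have hm1 : (1:ℝ) ≤ m := by
    have h : (1:ℝ)^r ≤ (1+c)^r := pow_le_pow_left₀ (by norm_num) (by linarith) r
    simpa [hmdef] using h
  have ED : ∑ S : Finset V, w S * ((D S).card : ℝ) ≤ (n:ℝ) * q ^ (m : ℝ) := by
    have hcard : ∀ S : Finset V, ((D S).card : ℝ)
        = ∑ v : V, (if Disjoint (ball r v) S then (1:ℝ) else 0) := by
      intro S
      simp only [hDdef]
      rw [Finset.sum_ite, Finset.sum_const, Finset.sum_const]
      simp [Finset.filter_filter]
    have step1 : ∑ S : Finset V, w S * ((D S).card : ℝ)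
        = ∑ v : V, q ^ (ball r v).card := by
      calc ∑ S : Finset V, w S * ((D S).card : ℝ)
          = ∑ S : Finset V, ∑ v : V, (if Disjoint (ball r v) S then w S else 0) := by
            apply Finset.sum_congr rfl
            intro S _
            rw [hcard S, Finset.mul_sum]
            apply Finset.sum_congr rfl
            intro v _
            by_cases hv : Disjoint (ball r v) S <;> simp [hv]
        _ = ∑ v : V, ∑ S : Finset V, (if Disjoint (ball r v) S then w S else 0) :=
            Finset.sum_comm
        _ = ∑ v : V, q ^ (ball r v).card :=
            Finset.sum_congr rfl fun v _ => key (ball r v)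
    rw [step1]
    have hterm : ∀ v : V, q ^ (ball r v).card ≤ q ^ (m : ℝ) := by
      intro v
      rcases eq_or_lt_of_le hq0 with hq | hq
      · -- q = 0
        have hb1 : 1 ≤ (ball r v).card := Finset.card_pos.mpr ⟨v, hball_self r v⟩
        rw [← hq]
        rw [Real.zero_rpow (by positivity : m ≠ 0)]
        rw [zero_pow (by omega : (ball r v).card ≠ 0)]
      · have := hsize v
        calc q ^ (ball r v).card = q ^ (((ball r v).card : ℕ) : ℝ) :=
              (Real.rpow_natCast q _).symm
          _ ≤ q ^ (m : ℝ) := Real.rpow_le_rpow_of_exponent_ge hq hq1 (by exact_mod_cast this)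
    calc ∑ v : V, q ^ (ball r v).card ≤ ∑ _v : V, q ^ (m : ℝ) :=
          Finset.sum_le_sum fun v _ => hterm v
      _ = (n:ℝ) * q ^ (m : ℝ) := by simp [mul_comm, hn]
  -- find a good S
  have hqm0 : 0 ≤ q ^ (m : ℝ) := Real.rpow_nonneg hq0 m
  set C : ℝ := p * n + n * q ^ (m : ℝ) with hCdef
  have hgood : ∃ S : Finset V, (S.card : ℝ) + ((D S).card : ℝ) ≤ C := by
    by_contra hcon
    push_neg at hcon
    have hE : ∑ S : Finset V, w S * ((S.card : ℝ) + ((D S).card : ℝ)) ≤ C := by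
      rw [show (fun S : Finset V => w S * ((S.card : ℝ) + ((D S).card : ℝ)))
          = fun S => w S * (S.card : ℝ) + w S * ((D S).card : ℝ) from funext fun S => by ring]
      rw [Finset.sum_add_distrib, ES]
      linarith [ED]
    obtain ⟨S₀, -, hS₀⟩ : ∃ S₀ ∈ (Finset.univ : Finset (Finset V)), w S₀ ≠ 0 :=
      Finset.exists_ne_zero_of_sum_ne_zero (by rw [hsum1]; norm_num)
    have hwS₀ : 0 < w S₀ := lt_of_le_of_ne (hw0 S₀) (Ne.symm hS₀)
    have hlt : ∑ S : Finset V, w S * C < ∑ S : Finset V, w S * ((S.card:ℝ) + ((D S).card:ℝ)) := by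
      apply Finset.sum_lt_sum
      · intro S _
        exact mul_le_mul_of_nonneg_left (le_of_lt (hcon S)) (hw0 S)
      · exact ⟨S₀, Finset.mem_univ S₀, by
          exact mul_lt_mul_of_pos_left (hcon S₀) hwS₀⟩
    rw [← Finset.sum_mul, hsum1, one_mul] at hlt
    linarith
  obtain ⟨S₀, hS₀⟩ := hgood
  refine ⟨S₀ ∪ D S₀, ?_, ?_⟩
  · intro v
    by_cases hdis : Disjoint (ball r v) S₀
    · refine ⟨v, ?_, by simp [SimpleGraph.dist_self]⟩
      apply Finset.mem_union_right
      simp only [hDdef, Finset.mem_filter]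
      exact ⟨Finset.mem_univ v, hdis⟩
    · obtain ⟨s, hs1, hs2⟩ := Finset.not_disjoint_iff.mp hdis
      refine ⟨s, Finset.mem_union_left _ hs2, ?_⟩
      simp only [hballdef, Finset.mem_filter] at hs1
      exact hs1.2
  · have h1 : ((S₀ ∪ D S₀).card : ℝ) ≤ (S₀.card : ℝ) + ((D S₀).card : ℝ) := by
      exact_mod_cast Finset.card_union_le S₀ (D S₀)
    calc ((S₀ ∪ D S₀).card : ℝ) ≤ C := le_trans h1 hS₀
      _ = ((1 - p) ^ ((m : ℝ)) + p) * n := by rw [hCdef]; simp only [hqdef]; ring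
      _ = ((1 - p) ^ (((1 + c) ^ r : ℝ)) + p) * n := by rw [hmdef]
end

section
/- Let G be a finite edge-weighted graph and x ∈ ℝ. Suppose U₀ ⊆ V(G) is a 2(s+2)-separated set of vertices such that for every u ∈ U₀ the ball B_G(u, s+1) has largest adjacency eigenvalue greater than x. Then the adjacency matrix A_G has at least |U₀| eigenvalues greater than x. -/
open scoped Classical

noncomputable def eigCountIn {V : Type*} [Fintype V] [DecidableEq V]
    (M : Matrix V V ℝ) (hM : M.IsHermitian) (E : Set ℝ) : ℕ :=
  (Finset.univ.filter fun i => hM.eigenvalues i ∈ E).card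

section Aux

open Matrix

lemma aux_dot_sum_left {ι V : Type*} [Fintype ι] [Fintype V] (h : ι → V → ℝ) (w : V → ℝ) :
    (∑ i, h i) ⬝ᵥ w = ∑ i, h i ⬝ᵥ w := by
  simp only [dotProduct, Finset.sum_apply, Finset.sum_mul]
  exact Finset.sum_comm

lemma aux_dot_sum_right {ι V : Type*} [Fintype ι] [Fintype V] (h : ι → V → ℝ) (w : V → ℝ) :
    w ⬝ᵥ (∑ i, h i) = ∑ i, w ⬝ᵥ h i := by
  simp only [dotProduct, Finset.sum_apply, Finset.mul_sum]
  exact Finset.sum_comm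

open Finset in
lemma key_count {V : Type*} [Fintype V] [DecidableEq V] [Nonempty V]
    (A : Matrix V V ℝ) (hAh : A.IsHermitian) (x : ℝ)
    {ι : Type*} [Fintype ι] (f : ι → EuclideanSpace ℝ V) (hf : Orthonormal ℝ f)
    (hQ : ∀ v : EuclideanSpace ℝ V, v ∈ Submodule.span ℝ (Set.range f) → v ≠ 0 →
      x * (inner ℝ v v : ℝ) < (inner ℝ v (Matrix.toEuclideanLin A v) : ℝ)) :
    Fintype.card ι ≤ eigCountIn A hAh (Set.Ioi x) := by
  by_contra hlt
  push_neg at hlt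
  set m := eigCountIn A hAh (Set.Ioi x) with hm
  set b := hAh.eigenvectorBasis with hb
  set μ := hAh.eigenvalues with hμ
  set S : Finset V := Finset.univ.filter (fun i => μ i ∈ Set.Ioi x) with hS
  have hmS : m = S.card := rfl
  set W : Submodule ℝ (EuclideanSpace ℝ V) := Submodule.span ℝ (Set.range f) with hW
  set E : Submodule ℝ (EuclideanSpace ℝ V) :=
    Submodule.span ℝ (Set.range (fun i : {i // i ∉ S} => b i.1)) with hE
  have hWrank : Module.finrank ℝ W = Fintype.card ι :=
    finrank_span_eq_card hf.linearIndependent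
  have hErank : Module.finrank ℝ E = Fintype.card {i // i ∉ S} := by
    apply finrank_span_eq_card
    exact b.orthonormal.linearIndependent.comp _ Subtype.val_injective
  have hcard : Fintype.card {i // i ∉ S} = Fintype.card V - m := by
    rw [hmS]
    rw [Fintype.card_subtype_compl]
    congr 1
    exact Fintype.card_coe S
  have htot : Module.finrank ℝ (EuclideanSpace ℝ V) = Fintype.card V :=
    finrank_euclideanSpace
  have hsup : Module.finrank ℝ ↥(W ⊔ E) ≤ Fintype.card V := by
    rw [← htot]; exact Submodule.finrank_le _
  have hsum := Submodule.finrank_sup_add_finrank_inf_eq W E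
  have hmle : m ≤ Fintype.card V := by
    rw [hmS]; exact (Finset.card_filter_le _ _).trans (by simp)
  have hpos : 0 < Module.finrank ℝ ↥(W ⊓ E) := by omega
  obtain ⟨v, hvne⟩ := Module.finrank_pos_iff_exists_ne_zero.mp hpos
  have hvW : (v : EuclideanSpace ℝ V) ∈ W := v.2.1
  have hvE : (v : EuclideanSpace ℝ V) ∈ E := v.2.2
  have hvne' : (v : EuclideanSpace ℝ V) ≠ 0 := by
    simpa [Submodule.coe_eq_zero] using hvne
  have hrepr0 : ∀ i ∈ S, b.repr (v : EuclideanSpace ℝ V) i = 0 := by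
    intro i hi
    rw [b.repr_apply_apply]
    refine Submodule.span_induction ?_ ?_ ?_ ?_ hvE
    · rintro w ⟨j, rfl⟩
      exact b.orthonormal.2 (fun h => j.2 (h ▸ hi))
    · simp
    · intro y z _ _ hy hz; rw [inner_add_right, hy, hz, add_zero]
    · intro a y _ hy; rw [inner_smul_right, hy, mul_zero]
  have hsymmA : (Matrix.toEuclideanLin A).IsSymmetric :=
    Matrix.isHermitian_iff_isSymmetric.1 hAh
  have hTrepr : ∀ i, b.repr (Matrix.toEuclideanLin A (v : EuclideanSpace ℝ V)) i
      = μ i * b.repr (v : EuclideanSpace ℝ V) i := by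
    intro i
    rw [b.repr_apply_apply, b.repr_apply_apply, ← hsymmA (b i) v]
    have h2 : Matrix.toEuclideanLin A (b i) = μ i • b i := by
      apply (WithLp.equiv 2 (V → ℝ)).injective
      change A *ᵥ (b i : V → ℝ) = ((μ i • b i : EuclideanSpace ℝ V) : V → ℝ)
      exact hAh.mulVec_eigenvectorBasis i
    rw [h2, real_inner_smul_left]
  have hinner1 : (inner ℝ (v : EuclideanSpace ℝ V) (v : EuclideanSpace ℝ V) : ℝ)
      = ∑ i, b.repr (v : EuclideanSpace ℝ V) i * b.repr (v : EuclideanSpace ℝ V) i := by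
    rw [← b.repr.inner_map_map]
    simp only [PiLp.inner_apply, RCLike.inner_apply, conj_trivial]
  have hinner2 : (inner ℝ (v : EuclideanSpace ℝ V) (Matrix.toEuclideanLin A v) : ℝ)
      = ∑ i, b.repr (v : EuclideanSpace ℝ V) i * (μ i * b.repr (v : EuclideanSpace ℝ V) i) := by
    rw [← b.repr.inner_map_map]
    simp only [PiLp.inner_apply, RCLike.inner_apply, conj_trivial]
    refine Finset.sum_congr rfl fun i _ => ?_
    rw [hTrepr i]; ring
  have hle : (inner ℝ (v : EuclideanSpace ℝ V) (Matrix.toEuclideanLin A v) : ℝ)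
      ≤ x * (inner ℝ (v : EuclideanSpace ℝ V) (v : EuclideanSpace ℝ V) : ℝ) := by
    rw [hinner1, hinner2, Finset.mul_sum]
    refine Finset.sum_le_sum fun i _ => ?_
    by_cases hi : i ∈ S
    · rw [hrepr0 i hi]; simp
    · have hμi : μ i ≤ x := by
        simp only [hS, Finset.mem_filter, Finset.mem_univ, true_and, Set.mem_Ioi] at hi
        linarith [not_lt.mp hi]
      have hsq : 0 ≤ b.repr (v : EuclideanSpace ℝ V) i * b.repr (v : EuclideanSpace ℝ V) i :=
        mul_self_nonneg _
      calc b.repr (v : EuclideanSpace ℝ V) i * (μ i * b.repr (v : EuclideanSpace ℝ V) i)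
          = μ i * (b.repr (v : EuclideanSpace ℝ V) i * b.repr (v : EuclideanSpace ℝ V) i) := by
            ring
        _ ≤ x * (b.repr (v : EuclideanSpace ℝ V) i * b.repr (v : EuclideanSpace ℝ V) i) :=
            mul_le_mul_of_nonneg_right hμi hsq
  exact absurd (hQ v hvW hvne') (not_lt.mpr hle)

lemma exists_testvec {V : Type*} [Fintype V] [DecidableEq V] [Nonempty V]
    (G : SimpleGraph V) (A : Matrix V V ℝ)
    (hAs : ∀ a b, A a b = A b a) (hdiag : ∀ a, A a a = 0)
    (u : V) (x : ℝ) (r : ℕ) (hx : x < lam1 (ballMat G A u r)) :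
    ∃ v : V → ℝ, (∀ a, v a ≠ 0 → G.Reachable u a ∧ G.dist u a ≤ r) ∧
      (∑ a, v a * v a) = 1 ∧ x < v ⬝ᵥ (A *ᵥ v) := by
  rcases lt_or_ge x 0 with hx0 | hx0
  · refine ⟨Pi.single u 1, ?_, ?_, ?_⟩
    · intro a ha
      by_cases h : a = u
      · subst h; exact ⟨⟨SimpleGraph.Walk.nil⟩, by simp [SimpleGraph.dist_self]⟩
      · exfalso; apply ha; simp [Pi.single_apply, h]
    · rw [Finset.sum_eq_single u]
      · simp
      · intro a _ ha; simp [Pi.single_apply, ha]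
      · simp
    · have h1 : (Pi.single u 1 : V → ℝ) ⬝ᵥ (A *ᵥ Pi.single u 1) = A u u := by
        rw [dotProduct]
        rw [Finset.sum_eq_single u]
        · simp [Matrix.mulVec_single]
        · intro a _ ha; simp [Pi.single_apply, ha]
        · simp
      rw [h1, hdiag]; exact hx0
  · set B := ballMat G A u r with hB
    have hBh : B.IsHermitian := by
      ext a b
      simp only [Matrix.conjTranspose_apply, star_trivial, hB, ballMat]
      rw [hAs b a]
      exact if_congr and_comm rfl rfl
    have hspec : spectrum ℝ B = Set.range hBh.eigenvalues :=
      hBh.spectrum_real_eq_range_eigenvalues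
    have hmem : lam1 B ∈ Set.range hBh.eigenvalues := by
      rw [lam1, hspec]
      exact (Set.range_nonempty _).csSup_mem (Set.finite_range _)
    obtain ⟨j, hj⟩ := hmem
    have hμx : x < hBh.eigenvalues j := by rw [hj]; exact hx
    have hμ0 : hBh.eigenvalues j ≠ 0 := (lt_of_le_of_lt hx0 hμx).ne'
    set v : V → ℝ := ⇑(hBh.eigenvectorBasis j) with hv
    have heig : B *ᵥ v = hBh.eigenvalues j • v := hBh.mulVec_eigenvectorBasis j
    have hsupp : ∀ a, v a ≠ 0 → G.Reachable u a ∧ G.dist u a ≤ r := by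
      intro a ha
      by_contra hc
      have h0 : (B *ᵥ v) a = 0 := by
        rw [Matrix.mulVec, dotProduct]
        refine Finset.sum_eq_zero fun b _ => ?_
        have : B a b = 0 := by
          simp only [hB, ballMat]
          rw [if_neg]
          intro h; exact hc h.1
        rw [this, zero_mul]
      rw [heig] at h0
      simp only [Pi.smul_apply, smul_eq_mul] at h0
      rcases mul_eq_zero.mp h0 with h | h
      · exact hμ0 h
      · exact ha h
    have hnorm : ∑ a, v a * v a = 1 := by
      have h1 := hBh.eigenvectorBasis.orthonormal.1 j
      have h2 : (inner ℝ (hBh.eigenvectorBasis j) (hBh.eigenvectorBasis j) : ℝ) = 1 := by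
        rw [real_inner_self_eq_norm_sq, h1]; norm_num
      simp only [PiLp.inner_apply, RCLike.inner_apply, conj_trivial] at h2; exact h2
    have hquad : v ⬝ᵥ (A *ᵥ v) = v ⬝ᵥ (B *ᵥ v) := by
      simp only [dotProduct, Matrix.mulVec]
      refine Finset.sum_congr rfl fun a _ => ?_
      by_cases hva : v a = 0
      · rw [hva, zero_mul, zero_mul]
      · congr 1
        refine Finset.sum_congr rfl fun c _ => ?_
        by_cases hvc : v c = 0
        · rw [hvc, mul_zero, mul_zero]
        · congr 1
          simp only [hB, ballMat]
          rw [if_pos ⟨hsupp a hva, hsupp c hvc⟩]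
    refine ⟨v, hsupp, hnorm, ?_⟩
    rw [hquad, heig]
    have : v ⬝ᵥ (hBh.eigenvalues j • v) = hBh.eigenvalues j * ∑ a, v a * v a := by
      simp only [dotProduct, Pi.smul_apply, smul_eq_mul, Finset.mul_sum]
      exact Finset.sum_congr rfl fun a _ => by ring
    rw [this, hnorm, mul_one]
    exact hμx

end Aux

/-- If `U₀` is `2(s+2)`-separated and every ball `B(u, s+1)`, `u ∈ U₀`, has
largest eigenvalue exceeding `x`, then `A_G` has at least `|U₀|` eigenvalues
greater than `x`. -/
theorem stmt9 {V : Type*} [Fintype V] [DecidableEq V] [Nonempty V]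
    (G : SimpleGraph V) (w : V → V → ℝ)
    (hsymm : ∀ u v, w u v = w v u) (hw0 : ∀ u v, 0 ≤ w u v)
    (A : Matrix V V ℝ)
    (hA : A = fun u v => if G.Adj u v then w u v else 0)
    (hAh : A.IsHermitian)
    (s : ℕ) (hs : 0 < s) (x : ℝ)
    (U₀ : Finset V)
    (hsep : ∀ u ∈ U₀, ∀ v ∈ U₀, u ≠ v →
      ¬ G.Reachable u v ∨ 2 * (s + 2) ≤ G.dist u v)
    (hball : ∀ u ∈ U₀, x < lam1 (ballMat G A u (s + 1))) :
    U₀.card ≤ eigCountIn A hAh (Set.Ioi x) := by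
  classical
  have hAs : ∀ a b, A a b = A b a := by
    intro a b
    simp only [hA]
    by_cases h : G.Adj a b
    · rw [if_pos h, if_pos h.symm, hsymm]
    · rw [if_neg h, if_neg (fun h' => h h'.symm)]
  have hdiag : ∀ a, A a a = 0 := by
    intro a; simp only [hA]; rw [if_neg (G.irrefl)]
  have hadj : ∀ a b, A a b ≠ 0 → G.Adj a b := by
    intro a b h
    by_contra h'
    simp only [hA] at h
    rw [if_neg h'] at h
    exact h rfl
  have hex : ∀ u : {y // y ∈ U₀}, ∃ v : V → ℝ,
      (∀ a, v a ≠ 0 → G.Reachable (u : V) a ∧ G.dist (u : V) a ≤ s + 1) ∧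
      (∑ a, v a * v a) = 1 ∧ x < dotProduct v (A.mulVec v) :=
    fun u => exists_testvec G A hAs hdiag u.1 x (s + 1) (hball u.1 u.2)
  choose g hgsupp hgnorm hgquad using hex
  -- separated supports
  have hsep' : ∀ (p q : {y // y ∈ U₀}), p ≠ q → ∀ a b : V,
      g p a ≠ 0 → g q b ≠ 0 → a ≠ b ∧ ¬ G.Adj a b := by
    intro p q hpq a b hpa hqb
    obtain ⟨hr1, hd1⟩ := hgsupp p a hpa
    obtain ⟨hr2, hd2⟩ := hgsupp q b hqb
    obtain ⟨w1, hw1⟩ := hr1.exists_walk_length_eq_dist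
    obtain ⟨w2, hw2⟩ := hr2.exists_walk_length_eq_dist
    have hne : (p : V) ≠ (q : V) := fun h => hpq (Subtype.ext h)
    constructor
    · rintro rfl
      have hreach : G.Reachable (p : V) (q : V) := ⟨w1.append w2.reverse⟩
      have hdist : G.dist (p : V) (q : V) ≤ 2 * s + 2 := by
        calc G.dist (p : V) (q : V) ≤ (w1.append w2.reverse).length :=
              SimpleGraph.dist_le _
          _ = w1.length + w2.length := by
              rw [SimpleGraph.Walk.length_append, SimpleGraph.Walk.length_reverse]
          _ ≤ (s + 1) + (s + 1) := by rw [hw1, hw2]; omega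
          _ = 2 * s + 2 := by ring
      rcases hsep p p.2 q q.2 hne with h | h
      · exact h hreach
      · omega
    · intro hadj'
      have hreach : G.Reachable (p : V) (q : V) :=
        ⟨w1.append (SimpleGraph.Walk.cons hadj' w2.reverse)⟩
      have hdist : G.dist (p : V) (q : V) ≤ 2 * s + 3 := by
        calc G.dist (p : V) (q : V)
            ≤ (w1.append (SimpleGraph.Walk.cons hadj' w2.reverse)).length :=
              SimpleGraph.dist_le _
          _ = w1.length + (w2.length + 1) := by
              rw [SimpleGraph.Walk.length_append, SimpleGraph.Walk.length_cons,
                SimpleGraph.Walk.length_reverse]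
          _ ≤ (s + 1) + ((s + 1) + 1) := by rw [hw1, hw2]; omega
          _ = 2 * s + 3 := by ring
      rcases hsep p p.2 q q.2 hne with h | h
      · exact h hreach
      · omega
  have hcross : ∀ (p q : {y // y ∈ U₀}), p ≠ q →
      dotProduct (g p) (A.mulVec (g q)) = 0 := by
    intro p q hpq
    rw [dotProduct]
    refine Finset.sum_eq_zero fun a _ => ?_
    by_cases hpa : g p a = 0
    · rw [hpa, zero_mul]
    · have h0 : (A.mulVec (g q)) a = 0 := by
        rw [Matrix.mulVec, dotProduct]
        refine Finset.sum_eq_zero fun b _ => ?_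
        by_cases hqb : g q b = 0
        · rw [hqb, mul_zero]
        · by_cases hab : A a b = 0
          · rw [hab, zero_mul]
          · exact absurd (hadj a b hab) (hsep' p q hpq a b hpa hqb).2
      rw [h0, mul_zero]
  have hdot : ∀ p q : {y // y ∈ U₀},
      dotProduct (g p) (g q) = if p = q then 1 else 0 := by
    intro p q
    by_cases h : p = q
    · subst h; rw [if_pos rfl, dotProduct]; exact hgnorm p
    · rw [if_neg h, dotProduct]
      refine Finset.sum_eq_zero fun a _ => ?_
      by_cases hpa : g p a = 0
      · rw [hpa, zero_mul]
      · by_cases hqa : g q a = 0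
        · rw [hqa, mul_zero]
        · exact absurd rfl (hsep' p q h a a hpa hqa).1
  set L := WithLp.linearEquiv 2 ℝ (V → ℝ) with hL
  set f : {y // y ∈ U₀} → EuclideanSpace ℝ V :=
    fun p => L.symm (g p) with hf
  have hfon : Orthonormal ℝ f := by
    rw [orthonormal_iff_ite]
    intro p q
    have h1 : (inner ℝ (f p) (f q) : ℝ) = dotProduct (g p) (g q) := by
      simp only [hf, hL, PiLp.inner_apply, RCLike.inner_apply, conj_trivial,
        WithLp.coe_symm_linearEquiv, PiLp.toLp_apply, dotProduct]
      exact Finset.sum_congr rfl fun _ _ => mul_comm _ _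
    rw [h1, hdot]
  have hQ : ∀ v : EuclideanSpace ℝ V, v ∈ Submodule.span ℝ (Set.range f) → v ≠ 0 →
      x * (inner ℝ v v : ℝ) < (inner ℝ v (Matrix.toEuclideanLin A v) : ℝ) := by
    intro v hv hvne
    obtain ⟨c, hc⟩ := (Submodule.mem_span_range_iff_exists_fun ℝ).mp hv
    set p : V → ℝ := L v with hp
    have hpsum : ∑ i, c i • g i = p := by
      rw [hp, ← hc, map_sum]
      refine Finset.sum_congr rfl fun i _ => ?_
      rw [map_smul, hf]
      simp
    -- some coefficient is nonzero
    have hcne : ∃ i, c i ≠ 0 := by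
      by_contra hall
      push_neg at hall
      apply hvne
      rw [← hc]
      refine Finset.sum_eq_zero fun i _ => ?_
      rw [hall i, zero_smul]
    obtain ⟨i₀, hi₀⟩ := hcne
    -- inner products as dot products
    have hiv : (inner ℝ v v : ℝ) = dotProduct p p := by
      simp only [PiLp.inner_apply, RCLike.inner_apply, conj_trivial, dotProduct, hp, hL,
        WithLp.coe_linearEquiv]
    have hiav : (inner ℝ v (Matrix.toEuclideanLin A v) : ℝ)
        = dotProduct p (A.mulVec p) := by
      rw [Matrix.toEuclideanLin_apply]
      simp only [PiLp.inner_apply, RCLike.inner_apply, conj_trivial, dotProduct, hp, hL,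
        WithLp.coe_linearEquiv, PiLp.toLp_apply]
      exact Finset.sum_congr rfl fun _ _ => mul_comm _ _
    -- expand the quadratic form
    have hmv : A.mulVec (∑ i, c i • g i) = ∑ i, c i • A.mulVec (g i) := by
      rw [← Matrix.mulVecLin_apply, map_sum]
      refine Finset.sum_congr rfl fun i _ => ?_
      rw [map_smul, Matrix.mulVecLin_apply]
    have hquad : dotProduct p (A.mulVec p)
        = ∑ i, c i * (c i * dotProduct (g i) (A.mulVec (g i))) := by
      rw [← hpsum, hmv, aux_dot_sum_left]
      refine Finset.sum_congr rfl fun i _ => ?_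
      rw [smul_dotProduct, aux_dot_sum_right, smul_eq_mul]
      congr 1
      rw [Finset.sum_eq_single i]
      · rw [dotProduct_smul, smul_eq_mul]
      · intro j _ hj
        rw [dotProduct_smul, smul_eq_mul, hcross i j (fun h => hj h.symm), mul_zero]
      · intro h; exact absurd (Finset.mem_univ i) h
    have hnrm : dotProduct p p = ∑ i, c i * c i := by
      rw [← hpsum, aux_dot_sum_left]
      refine Finset.sum_congr rfl fun i _ => ?_
      rw [smul_dotProduct, aux_dot_sum_right, smul_eq_mul]
      congr 1
      rw [Finset.sum_eq_single i]
      · rw [dotProduct_smul, smul_eq_mul, hdot i i, if_pos rfl, mul_one]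
      · intro j _ hj
        rw [dotProduct_smul, smul_eq_mul, hdot i j, if_neg (fun h => hj h.symm),
          mul_zero]
      · intro h; exact absurd (Finset.mem_univ i) h
    rw [hiv, hiav, hquad, hnrm, Finset.mul_sum]
    refine Finset.sum_lt_sum (fun i _ => ?_) ⟨i₀, Finset.mem_univ i₀, ?_⟩
    · have h1 : x < dotProduct (g i) (A.mulVec (g i)) := hgquad i
      have h2 : 0 ≤ c i * c i := mul_self_nonneg _
      calc x * (c i * c i) ≤ dotProduct (g i) (A.mulVec (g i)) * (c i * c i) :=
            mul_le_mul_of_nonneg_right h1.le h2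
        _ = c i * (c i * dotProduct (g i) (A.mulVec (g i))) := by ring
    · have h1 : x < dotProduct (g i₀) (A.mulVec (g i₀)) := hgquad i₀
      have h2 : 0 < c i₀ * c i₀ := mul_self_pos.mpr hi₀
      calc x * (c i₀ * c i₀)
          < dotProduct (g i₀) (A.mulVec (g i₀)) * (c i₀ * c i₀) :=
            mul_lt_mul_of_pos_right h1 h2
        _ = c i₀ * (c i₀ * dotProduct (g i₀) (A.mulVec (g i₀))) := by ring
  have hkey := key_count A hAh x f hfon hQ
  rwa [Fintype.card_coe] at hkey
end

section
/- Let μ be a probability measure on [−ρ, ρ] that is symmetric about 0, and suppose there exist C, α > 0 with μ([(1−θ)ρ, ρ]) ≤ C θ^α for all 0 < θ < 1/2. Then for every ε > 0 there is a constant C' (depending on C, α, ε, ρ) such that ∫ t^{2n} dμ(t) ≤ C' ρ^{2n} n^{−α+ε} for all positive integers n. -/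
open MeasureTheory

/-- Single term bound: `x^j/j! ≤ exp x` for `x ≥ 0`. -/
lemma aux_pow_div_factorial_le_exp (x : ℝ) (hx : 0 ≤ x) (j : ℕ) :
    x ^ j / j.factorial ≤ Real.exp x := by
  calc x ^ j / j.factorial
      ≤ ∑ i ∈ Finset.range (j + 1), x ^ i / i.factorial := by
        refine Finset.single_le_sum (f := fun i => x ^ i / (i.factorial : ℝ)) ?_ ?_
        · intro i _
          positivity
        · exact Finset.self_mem_range_succ j
    _ ≤ Real.exp x := Real.sum_le_exp_of_nonneg hx _

/-- Crude bound: even moments are at most `ρ^(2n)`. -/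
lemma aux_crude (ρ : ℝ) (hρ : 0 < ρ) (μ : Measure ℝ) [IsProbabilityMeasure μ]
    (hsupp : μ (Set.Icc (-ρ) ρ)ᶜ = 0) (n : ℕ) :
    ∫ t, t ^ (2 * n) ∂μ ≤ ρ ^ (2 * n) := by
  have hae : ∀ᵐ t ∂μ, t ∈ Set.Icc (-ρ) ρ := by
    rw [MeasureTheory.ae_iff]
    exact hsupp
  have hbound : ∀ᵐ t ∂μ, t ^ (2 * n) ≤ ρ ^ (2 * n) := by
    filter_upwards [hae] with t ht
    have habs : |t| ≤ ρ := abs_le.2 ⟨ht.1, ht.2⟩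
    calc t ^ (2 * n) ≤ |t ^ (2 * n)| := le_abs_self _
      _ = |t| ^ (2 * n) := abs_pow t (2 * n)
      _ ≤ ρ ^ (2 * n) := pow_le_pow_left₀ (abs_nonneg t) habs _
  calc ∫ t, t ^ (2 * n) ∂μ ≤ ∫ _t, ρ ^ (2 * n) ∂μ := by
        refine integral_mono_of_nonneg ?_ (integrable_const _) hbound
        filter_upwards with t using even_two_mul n |>.pow_nonneg t
    _ = ρ ^ (2 * n) := by simp
  
/-- Splitting the moment integral according to whether `|t| ≤ (1-θ)ρ`. -/
lemma aux_split (ρ : ℝ) (hρ : 0 < ρ) (μ : Measure ℝ) [IsProbabilityMeasure μ]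
    (hsupp : μ (Set.Icc (-ρ) ρ)ᶜ = 0)
    (hsym : μ.map (fun t => -t) = μ)
    (θ : ℝ) (hθ0 : 0 < θ) (hθ1 : θ < 1) (n : ℕ) :
    ∫ t, t ^ (2 * n) ∂μ ≤
      ((1 - θ) * ρ) ^ (2 * n)
        + ρ ^ (2 * n) * (2 * (μ (Set.Icc ((1 - θ) * ρ) ρ)).toReal) := by
  set A : Set ℝ := Set.Icc ((1 - θ) * ρ) ρ with hA
  set B : Set ℝ := Set.Icc (-ρ) (-((1 - θ) * ρ)) with hB
  have hmeas : MeasurableSet (A ∪ B) := (measurableSet_Icc).union measurableSet_Icc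
  set g : ℝ → ℝ := fun t => ((1 - θ) * ρ) ^ (2 * n)
      + (A ∪ B).indicator (fun _ => ρ ^ (2 * n)) t with hg
  have hint : Integrable g μ := by
    refine (integrable_const _).add ?_
    rw [integrable_indicator_iff hmeas]
    exact integrableOn_const (measure_ne_top μ _)
  have hae : ∀ᵐ t ∂μ, t ∈ Set.Icc (-ρ) ρ := by
    rw [MeasureTheory.ae_iff]
    exact hsupp
  have h0 : 0 ≤ (1 - θ) * ρ := mul_nonneg (by linarith) hρ.le
  have hle : ∀ᵐ t ∂μ, t ^ (2 * n) ≤ g t := by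
    filter_upwards [hae] with t ht
    rcases le_or_gt |t| ((1 - θ) * ρ) with h | h
    · have : t ^ (2 * n) ≤ ((1 - θ) * ρ) ^ (2 * n) := by
        calc t ^ (2 * n) ≤ |t ^ (2 * n)| := le_abs_self _
          _ = |t| ^ (2 * n) := abs_pow t (2 * n)
          _ ≤ ((1 - θ) * ρ) ^ (2 * n) := pow_le_pow_left₀ (abs_nonneg t) h _
      have hind : 0 ≤ (A ∪ B).indicator (fun _ => ρ ^ (2 * n)) t :=
        Set.indicator_nonneg (fun _ _ => by positivity) t
      simp only [hg]; linarith
    · have htAB : t ∈ A ∪ B := by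
        rcases le_or_gt 0 t with ht0 | ht0
        · left
          refine ⟨?_, ht.2⟩
          rw [abs_of_nonneg ht0] at h
          linarith
        · right
          rw [abs_of_neg ht0] at h
          exact ⟨ht.1, by linarith⟩
      have habs : |t| ≤ ρ := abs_le.2 ⟨ht.1, ht.2⟩
      have : t ^ (2 * n) ≤ ρ ^ (2 * n) := by
        calc t ^ (2 * n) ≤ |t ^ (2 * n)| := le_abs_self _
          _ = |t| ^ (2 * n) := abs_pow t (2 * n)
          _ ≤ ρ ^ (2 * n) := pow_le_pow_left₀ (abs_nonneg t) habs _
      simp only [hg, Set.indicator_of_mem htAB]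
      have : (0:ℝ) ≤ ((1 - θ) * ρ) ^ (2 * n) := by positivity
      linarith
  have hBA : μ B = μ A := by
    conv_lhs => rw [← hsym]
    rw [Measure.map_apply measurable_neg measurableSet_Icc]
    congr 1
    ext t
    simp only [Set.mem_preimage, Set.mem_Icc, hA]
    constructor
    · rintro ⟨h1, h2⟩; constructor <;> linarith
    · rintro ⟨h1, h2⟩; constructor <;> linarith
  have hmub : (μ (A ∪ B)).toReal ≤ 2 * (μ A).toReal := by
    have h1 : μ (A ∪ B) ≤ μ A + μ A := by
      calc μ (A ∪ B) ≤ μ A + μ B := measure_union_le A B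
        _ = μ A + μ A := by rw [hBA]
    have h2 : (μ A + μ A) ≠ ⊤ := by
      exact ENNReal.add_ne_top.2 ⟨measure_ne_top μ A, measure_ne_top μ A⟩
    calc (μ (A ∪ B)).toReal ≤ (μ A + μ A).toReal := ENNReal.toReal_mono h2 h1
      _ = 2 * (μ A).toReal := by
          rw [ENNReal.toReal_add (measure_ne_top μ A) (measure_ne_top μ A)]; ring
  have hnonneg : ∀ᵐ t ∂μ, 0 ≤ t ^ (2 * n) := by
    filter_upwards with t using even_two_mul n |>.pow_nonneg t
  calc ∫ t, t ^ (2 * n) ∂μ ≤ ∫ t, g t ∂μ :=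
        integral_mono_of_nonneg hnonneg hint hle
    _ = ((1 - θ) * ρ) ^ (2 * n) + ρ ^ (2 * n) * (μ (A ∪ B)).toReal := by
        rw [hg, integral_add (integrable_const _) ((integrable_indicator_iff hmeas).2
          (integrableOn_const (measure_ne_top μ _)))]
        rw [integral_const, integral_indicator_const _ hmeas]
        simp [mul_comm]
        exact Or.inl rfl
    _ ≤ ((1 - θ) * ρ) ^ (2 * n) + ρ ^ (2 * n) * (2 * (μ A).toReal) := by
        have : (0:ℝ) ≤ ρ ^ (2 * n) := by positivity
        nlinarith [hmub]

/-- If a symmetric probability measure `μ` on `[-ρ, ρ]` satisfies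
`μ[(1-θ)ρ, ρ] ≤ C θ^α` for all `0 < θ < 1/2`, then for every `ε > 0` the even
moments satisfy `∫ t^{2n} dμ ≤ C' ρ^{2n} n^{-α+ε}`. -/
theorem stmt17 (ρ : ℝ) (hρ : 0 < ρ) (μ : Measure ℝ) [IsProbabilityMeasure μ]
    (hsupp : μ (Set.Icc (-ρ) ρ)ᶜ = 0)
    (hsym : μ.map (fun t => -t) = μ)
    (C α : ℝ) (hC : 0 < C) (hα : 0 < α)
    (hconc : ∀ θ : ℝ, 0 < θ → θ < 1 / 2 →
      (μ (Set.Icc ((1 - θ) * ρ) ρ)).toReal ≤ C * θ ^ α) :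
    ∀ ε : ℝ, 0 < ε →
      ∃ C' : ℝ, 0 < C' ∧
        ∀ n : ℕ, 0 < n →
          ∫ t, t ^ (2 * n) ∂μ ≤ C' * ρ ^ (2 * n) * (n : ℝ) ^ (-α + ε) := by
  intro ε hε
  by_cases hεα : α ≤ ε
  · -- trivial case: exponent is nonnegative
    refine ⟨1, one_pos, fun n hn => ?_⟩
    have h1 : (1:ℝ) ≤ (n : ℝ) := by exact_mod_cast hn
    have h2 : (1:ℝ) ≤ (n : ℝ) ^ (-α + ε) :=
      Real.one_le_rpow h1 (by linarith)
    have h3 := aux_crude ρ hρ μ hsupp n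
    have h4 : (0:ℝ) ≤ ρ ^ (2 * n) := by positivity
    nlinarith
  · push_neg at hεα
    -- ε < α
    set γ : ℝ := ε / α - 1 with hγ
    have hγneg : γ < 0 := by
      have : ε / α < 1 := (div_lt_one hα).2 hεα
      simp [hγ]; linarith
    -- find N₀ such that n ≥ N₀ implies (n:ℝ)^γ < 1/2
    have htend : Filter.Tendsto (fun n : ℕ => (n : ℝ) ^ γ) Filter.atTop (nhds 0) := by
      have h := tendsto_rpow_neg_atTop (y := -γ) (by linarith : (0:ℝ) < -γ)
      simp only [neg_neg] at h
      exact h.comp tendsto_natCast_atTop_atTop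
    have hev : ∀ᶠ n : ℕ in Filter.atTop, (n : ℝ) ^ γ < 1 / 2 := by
      have := htend.eventually (eventually_lt_nhds (show (0:ℝ) < 1/2 by norm_num))
      exact this
    obtain ⟨N₁, hN₁⟩ := Filter.eventually_atTop.1 hev
    set N₀ : ℕ := max N₁ 1 with hN₀
    have hN₀1 : 1 ≤ N₀ := le_max_right _ _
    -- choose j
    set j : ℕ := ⌈α * α / ε⌉₊ with hj
    have hjα : α ≤ (j : ℝ) * (ε / α) := by
      have h1 : α * α / ε ≤ (j : ℝ) := Nat.le_ceil _
      have hεα' : 0 < ε / α := div_pos hε hα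
      calc α = (α * α / ε) * (ε / α) := by field_simp
        _ ≤ (j : ℝ) * (ε / α) := mul_le_mul_of_nonneg_right h1 hεα'.le
    set C' : ℝ := (N₀ : ℝ) ^ (α - ε) + ((j.factorial : ℝ) + 2 * C) with hC'
    have hN₀pos : (0:ℝ) < (N₀ : ℝ) := by exact_mod_cast hN₀1
    have hC'pos : 0 < C' := by
      have h1 : (0:ℝ) < (N₀ : ℝ) ^ (α - ε) := Real.rpow_pos_of_pos hN₀pos _
      have h2 : (0:ℝ) < (j.factorial : ℝ) := by exact_mod_cast j.factorial_pos
      rw [hC']; linarith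
    refine ⟨C', hC'pos, fun n hn => ?_⟩
    have hnpos : (0:ℝ) < (n : ℝ) := by exact_mod_cast hn
    have hn1 : (1:ℝ) ≤ (n : ℝ) := by exact_mod_cast hn
    have hrpos : (0:ℝ) < (n : ℝ) ^ (-α + ε) := Real.rpow_pos_of_pos hnpos _
    have hρn : (0:ℝ) < ρ ^ (2 * n) := by positivity
    rcases lt_or_ge n N₀ with hsmall | hbig
    · -- small n case
      have h3 := aux_crude ρ hρ μ hsupp n
      have hkey : 1 ≤ (N₀ : ℝ) ^ (α - ε) * (n : ℝ) ^ (-α + ε) := by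
        have h1 : (n : ℝ) ^ (α - ε) ≤ (N₀ : ℝ) ^ (α - ε) := by
          apply Real.rpow_le_rpow hnpos.le (by exact_mod_cast hsmall.le) (by linarith)
        have h2 : (0:ℝ) < (n : ℝ) ^ (α - ε) := Real.rpow_pos_of_pos hnpos _
        calc (1:ℝ) = (n : ℝ) ^ (α - ε) * (n : ℝ) ^ (-α + ε) := by
              rw [← Real.rpow_add hnpos]
              norm_num
          _ ≤ (N₀ : ℝ) ^ (α - ε) * (n : ℝ) ^ (-α + ε) :=
              mul_le_mul_of_nonneg_right h1 hrpos.le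
      have hC'ge : (N₀ : ℝ) ^ (α - ε) ≤ C' := by
        have h2 : (0:ℝ) < (j.factorial : ℝ) := by exact_mod_cast j.factorial_pos
        rw [hC']; linarith
      calc ∫ t, t ^ (2 * n) ∂μ ≤ ρ ^ (2 * n) := h3
        _ = 1 * ρ ^ (2 * n) := (one_mul _).symm
        _ ≤ ((N₀ : ℝ) ^ (α - ε) * (n : ℝ) ^ (-α + ε)) * ρ ^ (2 * n) :=
            mul_le_mul_of_nonneg_right hkey hρn.le
        _ ≤ (C' * (n : ℝ) ^ (-α + ε)) * ρ ^ (2 * n) := by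
            apply mul_le_mul_of_nonneg_right _ hρn.le
            exact mul_le_mul_of_nonneg_right hC'ge hrpos.le
        _ = C' * ρ ^ (2 * n) * (n : ℝ) ^ (-α + ε) := by ring
    · -- large n case
      set θ : ℝ := (n : ℝ) ^ γ with hθ
      have hθ0 : 0 < θ := Real.rpow_pos_of_pos hnpos _
      have hθhalf : θ < 1 / 2 := hN₁ n (le_trans (le_max_left _ _) hbig)
      have hθ1 : θ < 1 := by linarith
      have hsplit := aux_split ρ hρ μ hsupp hsym θ hθ0 hθ1 n
      -- tail term
      have htail : (μ (Set.Icc ((1 - θ) * ρ) ρ)).toReal ≤ C * (n : ℝ) ^ (ε - α) := by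
        have h1 := hconc θ hθ0 hθhalf
        have h2 : θ ^ α = (n : ℝ) ^ (ε - α) := by
          rw [hθ, ← Real.rpow_mul hnpos.le]
          congr 1
          rw [hγ]
          field_simp
        rwa [h2] at h1
      -- head term
      have hnθ : (n : ℝ) * θ = (n : ℝ) ^ (ε / α) := by
        calc (n : ℝ) * θ = (n : ℝ) ^ (1:ℝ) * (n : ℝ) ^ γ := by rw [Real.rpow_one]
          _ = (n : ℝ) ^ (1 + γ) := (Real.rpow_add hnpos 1 γ).symm
          _ = (n : ℝ) ^ (ε / α) := by rw [hγ]; ring_nf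
      have hhead : (1 - θ) ^ (2 * n) ≤ (j.factorial : ℝ) * (n : ℝ) ^ (-α) := by
        have hx : (0:ℝ) < 2 * (n : ℝ) * θ := by positivity
        have h1 : (1 - θ) ^ (2 * n) ≤ Real.exp (-θ) ^ (2 * n) := by
          apply pow_le_pow_left₀ (by linarith)
          linarith [Real.add_one_le_exp (-θ)]
        have h2 : Real.exp (-θ) ^ (2 * n) = Real.exp (-(2 * (n : ℝ) * θ)) := by
          rw [← Real.exp_nat_mul]
          congr 1
          push_cast
          ring
        have h3 : Real.exp (-(2 * (n:ℝ) * θ)) ≤ (j.factorial : ℝ) / (2 * (n:ℝ) * θ) ^ j := by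
          have hej := aux_pow_div_factorial_le_exp (2 * (n:ℝ) * θ) hx.le j
          have hpos : (0:ℝ) < (2 * (n:ℝ) * θ) ^ j / (j.factorial : ℝ) := by positivity
          calc Real.exp (-(2 * (n:ℝ) * θ)) = (Real.exp (2 * (n:ℝ) * θ))⁻¹ := Real.exp_neg _
            _ ≤ ((2 * (n:ℝ) * θ) ^ j / (j.factorial : ℝ))⁻¹ := inv_anti₀ hpos hej
            _ = (j.factorial : ℝ) / (2 * (n:ℝ) * θ) ^ j := inv_div _ _
        have h4 : (n:ℝ) ^ α ≤ (2 * (n:ℝ) * θ) ^ j := by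
          calc (n:ℝ) ^ α ≤ (n:ℝ) ^ ((ε / α) * j) := by
                apply Real.rpow_le_rpow_of_exponent_le hn1
                linarith [hjα]
            _ = ((n:ℝ) ^ (ε / α)) ^ (j:ℝ) := Real.rpow_mul hnpos.le _ _
            _ = ((n:ℝ) ^ (ε / α)) ^ j := Real.rpow_natCast _ j
            _ = ((n:ℝ) * θ) ^ j := by rw [hnθ]
            _ ≤ (2 * (n:ℝ) * θ) ^ j := by
                apply pow_le_pow_left₀ (by positivity)
                nlinarith
        have h5 : (j.factorial : ℝ) / (2 * (n:ℝ) * θ) ^ j ≤ (j.factorial : ℝ) * (n:ℝ) ^ (-α) := by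
          rw [Real.rpow_neg hnpos.le, div_eq_mul_inv]
          apply mul_le_mul_of_nonneg_left _ (by positivity)
          exact inv_anti₀ (Real.rpow_pos_of_pos hnpos α) h4
        calc (1 - θ) ^ (2 * n) ≤ Real.exp (-θ) ^ (2 * n) := h1
          _ = Real.exp (-(2 * (n:ℝ) * θ)) := h2
          _ ≤ (j.factorial : ℝ) / (2 * (n:ℝ) * θ) ^ j := h3
          _ ≤ (j.factorial : ℝ) * (n:ℝ) ^ (-α) := h5
      -- combine
      have e1 : (n:ℝ) ^ (ε - α) = (n:ℝ) ^ (-α + ε) := by congr 1; ring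
      have e2 : (n:ℝ) ^ (-α:ℝ) ≤ (n:ℝ) ^ (-α + ε) :=
        Real.rpow_le_rpow_of_exponent_le hn1 (by linarith)
      have hjf : (0:ℝ) ≤ (j.factorial : ℝ) := by positivity
      calc ∫ t, t ^ (2 * n) ∂μ
          ≤ ((1 - θ) * ρ) ^ (2 * n)
            + ρ ^ (2 * n) * (2 * (μ (Set.Icc ((1 - θ) * ρ) ρ)).toReal) := hsplit
        _ ≤ ρ ^ (2 * n) * ((j.factorial : ℝ) * (n:ℝ) ^ (-α))
            + ρ ^ (2 * n) * (2 * (C * (n:ℝ) ^ (ε - α))) := by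
            apply add_le_add
            · rw [mul_pow]
              calc (1 - θ) ^ (2 * n) * ρ ^ (2 * n)
                  ≤ ((j.factorial : ℝ) * (n:ℝ) ^ (-α)) * ρ ^ (2 * n) :=
                    mul_le_mul_of_nonneg_right hhead hρn.le
                _ = ρ ^ (2 * n) * ((j.factorial : ℝ) * (n:ℝ) ^ (-α)) := by ring
            · apply mul_le_mul_of_nonneg_left _ hρn.le
              linarith [htail]
        _ = ((j.factorial : ℝ) * (n:ℝ) ^ (-α:ℝ) + 2 * C * (n:ℝ) ^ (ε - α)) * ρ ^ (2 * n) := by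
            ring
        _ ≤ (((j.factorial : ℝ) + 2 * C) * (n:ℝ) ^ (-α + ε)) * ρ ^ (2 * n) := by
            apply mul_le_mul_of_nonneg_right _ hρn.le
            rw [e1]
            have := mul_le_mul_of_nonneg_left e2 hjf
            nlinarith
        _ ≤ C' * ρ ^ (2 * n) * (n : ℝ) ^ (-α + ε) := by
            have hge : (j.factorial : ℝ) + 2 * C ≤ C' := by
              have : (0:ℝ) < (N₀ : ℝ) ^ (α - ε) := Real.rpow_pos_of_pos hN₀pos _
              rw [hC']; linarith
            calc (((j.factorial : ℝ) + 2 * C) * (n:ℝ) ^ (-α + ε)) * ρ ^ (2 * n)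
                ≤ (C' * (n:ℝ) ^ (-α + ε)) * ρ ^ (2 * n) := by
                  apply mul_le_mul_of_nonneg_right _ hρn.le
                  exact mul_le_mul_of_nonneg_right hge hrpos.le
              _ = C' * ρ ^ (2 * n) * (n : ℝ) ^ (-α + ε) := by ring
end

section
/- Let A be a bounded self-adjoint operator on ℓ²(V) given by a d-regular graph adjacency structure: A has matrix entries in {0,1}, each row having exactly d ones, and operator norm ρ. Then for every finite S ⊆ V, the set N(S) of vertices adjacent to S satisfies |N(S)| ≥ (d/ρ)²·|S|; in particular the graph is a c-expander with 1 + c = d²/ρ². -/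
/-
Cauchy–Schwarz applied to `A 1_S` on the finite set `N(S)`: every `s ∈ S` contributes its whole
row, of `d` ones, to `∑_{v ∈ N(S)} (A 1_S) v`, so this sum is `d |S|`, while
`‖A 1_S‖² ≤ ρ² ‖1_S‖² = ρ² |S|`. Hence `(d |S|)² ≤ |N(S)| ρ² |S|`.
-/

open scoped Classical
open RealInnerProductSpace
open Finset

namespace lp

section

variable {V : Type*} [DecidableEq V]

noncomputable def finsetIndicator (S : Finset V) : lp (fun _ : V => ℝ) 2 :=
  ∑ s ∈ S, lp.single 2 s 1

theorem finsetIndicator_apply (S : Finset V) (v : V) :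
    lp.finsetIndicator S v = if v ∈ S then 1 else 0 := by
  simp only [finsetIndicator, coeFn_sum, Finset.sum_apply, lp.single_apply, Pi.single_apply]
  exact sum_ite_eq S v fun _ => 1

theorem norm_finsetIndicator_sq (S : Finset V) :
    ‖lp.finsetIndicator S‖ ^ 2 = #S := by
  rw [← real_inner_self_eq_norm_sq]
  nth_rewrite 1 [finsetIndicator]
  simp [sum_inner, lp.inner_single_left, finsetIndicator_apply]

end

theorem sq_sum_le_card_mul_norm_sq {V : Type*} (f : lp (fun _ : V => ℝ) 2) (N : Finset V) :
    (∑ v ∈ N, f v) ^ 2 ≤ #N * ‖f‖ ^ 2 := by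
  have hsq : ∑ v ∈ N, f v ^ 2 ≤ ‖f‖ ^ 2 := by
    simpa [Real.rpow_two] using lp.sum_rpow_le_norm_rpow (p := 2) (by norm_num) f N
  calc (∑ v ∈ N, f v) ^ 2 ≤ #N * ∑ v ∈ N, f v ^ 2 := sq_sum_le_card_mul_sum_sq
    _ ≤ #N * ‖f‖ ^ 2 := by gcongr

end lp

namespace SimpleGraph

variable {V : Type*} [DecidableEq V] (G : SimpleGraph V)
  {A : lp (fun _ : V => ℝ) 2 →L[ℝ] lp (fun _ : V => ℝ) 2}

theorem apply_finsetIndicator_apply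
    (hentries : ∀ u v : V, A (lp.single 2 u 1) v = if G.Adj u v then 1 else 0)
    (S : Finset V) (v : V) :
    A (lp.finsetIndicator S) v = ∑ s ∈ S, if G.Adj s v then 1 else 0 := by
  simp only [lp.finsetIndicator, map_sum, lp.coeFn_sum, Finset.sum_apply, hentries]

variable [∀ v, Fintype (G.neighborSet v)]

theorem sum_apply_finsetIndicator_eq_sum_degree
    (hentries : ∀ u v : V, A (lp.single 2 u 1) v = if G.Adj u v then 1 else 0)
    (S : Finset V) :
    ∑ v ∈ S.biUnion fun s => G.neighborFinset s, A (lp.finsetIndicator S) v =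
      ∑ s ∈ S, (G.degree s : ℝ) := by
  simp only [G.apply_finsetIndicator_apply hentries]
  rw [sum_comm]
  refine sum_congr rfl fun s hs => ?_
  have hrow : {v ∈ S.biUnion fun s => G.neighborFinset s | G.Adj s v} = G.neighborFinset s := by
    ext v
    simpa using fun hsv => ⟨s, hs, hsv⟩
  rw [sum_boole, hrow, card_neighborFinset_eq_degree]

theorem sq_sum_degree_le
    (hentries : ∀ u v : V, A (lp.single 2 u 1) v = if G.Adj u v then 1 else 0)
    (S : Finset V) :
    (∑ s ∈ S, (G.degree s : ℝ)) ^ 2 ≤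
      #(S.biUnion fun s => G.neighborFinset s) * (‖A‖ ^ 2 * #S) := by
  rw [← G.sum_apply_finsetIndicator_eq_sum_degree hentries, ← lp.norm_finsetIndicator_sq S,
    ← mul_pow]
  refine (lp.sq_sum_le_card_mul_norm_sq _ _).trans ?_
  gcongr
  exact A.le_opNorm _

end SimpleGraph

theorem stmt19_general {V : Type*} [DecidableEq V]
    (G : SimpleGraph V) [∀ v, Fintype (G.neighborSet v)]
    (d : ℕ) (hreg : ∀ v, G.degree v = d)
    (A : lp (fun _ : V => ℝ) 2 →L[ℝ] lp (fun _ : V => ℝ) 2)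
    (hentries : ∀ u v : V,
      (A (lp.single 2 u (1 : ℝ))) v = if G.Adj u v then (1 : ℝ) else 0)
    (ρ : ℝ) (hρ : ‖A‖ = ρ) :
    ∀ S : Finset V,
      ((d : ℝ) / ρ) ^ 2 * S.card ≤
        ((S.biUnion fun s => G.neighborFinset s).card : ℝ) := by
  intro S
  have key := G.sq_sum_degree_le hentries S
  simp only [hreg, sum_const, nsmul_eq_mul, hρ] at key
  rcases S.eq_empty_or_nonempty with rfl | hSne
  · simp
  have hSpos : (0 : ℝ) < #S := by exact_mod_cast hSne.card_pos
  rw [div_pow, div_mul_eq_mul_div]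
  -- `div_le_of_le_mul₀` also covers `ρ = 0`, where `d / ρ = 0`
  refine div_le_of_le_mul₀ (sq_nonneg ρ) (Nat.cast_nonneg _) ?_
  nlinarith

/-- A `d`-regular graph whose adjacency operator on `ℓ²(V)` is bounded
self-adjoint with norm `ρ` satisfies the vertex expansion
`|N(S)| ≥ (d/ρ)² |S|` for every finite `S`; i.e., it is a `c`-expander with
`1 + c = d²/ρ²`. -/
theorem stmt19 {V : Type*} [DecidableEq V]
    (G : SimpleGraph V) [∀ v, Fintype (G.neighborSet v)]
    (d : ℕ) (hd : 0 < d) (hreg : ∀ v, G.degree v = d)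
    (A : lp (fun _ : V => ℝ) 2 →L[ℝ] lp (fun _ : V => ℝ) 2)
    (hsa : ∀ f g : lp (fun _ : V => ℝ) 2, ⟪A f, g⟫ = ⟪f, A g⟫)
    (hentries : ∀ u v : V,
      (A (lp.single 2 u (1 : ℝ))) v = if G.Adj u v then (1 : ℝ) else 0)
    (ρ : ℝ) (hρpos : 0 < ρ) (hρ : ‖A‖ = ρ) :
    ∀ S : Finset V,
      ((d : ℝ) / ρ) ^ 2 * S.card ≤
        ((S.biUnion fun s => G.neighborFinset s).card : ℝ) :=
  stmt19_general G d hreg A hentries ρ hρ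
end
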